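/- arXiv:1111.5963 — 11 statements merged into one kernel-verified Lean document; each statement's English description precedes it below -/
import Mathlib

section
/- Let x : ℤ^d → ℝ be a Birkhoff configuration, i.e. for all k ∈ ℤ^d and l ∈ ℤ, either the shifted configuration τ_{k,l}x (defined by (τ_{k,l}x)_i = x_{i+k} + l) satisfies τ_{k,l}x ≥ x pointwise or τ_{k,l}x ≤ x pointwise. Then x has a rotation vector ω ∈ ℝ^d (meaning lim_{n→∞} x_{ni}/n = ⟨ω,i⟩ for all i ∈ ℤ^d) and moreover |x_i − x_0 − ⟨ω, i⟩| ≤ 1 for all i ∈ ℤ^d. -/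
open scoped BigOperators

/-- The shift operator `(τ_{k,l} x)_i = x_{i+k} + l`. -/
def tau {d : ℕ} (k : Fin d → ℤ) (l : ℤ) (x : (Fin d → ℤ) → ℝ) : (Fin d → ℤ) → ℝ :=
  fun i => x (i + k) + l

/-- A configuration is Birkhoff if every integer shift is pointwise comparable to it. -/
def IsBirkhoff {d : ℕ} (x : (Fin d → ℤ) → ℝ) : Prop :=
  ∀ (k : Fin d → ℤ) (l : ℤ), tau k l x ≤ x ∨ x ≤ tau k l x

/-- `x` has rotation vector `ω` : `lim_{n→∞} x_{ni}/n = ⟨ω,i⟩` for all `i`. -/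
def HasRotVec {d : ℕ} (x : (Fin d → ℤ) → ℝ) (ω : Fin d → ℝ) : Prop :=
  ∀ i : Fin d → ℤ, Filter.Tendsto (fun n : ℕ => x ((n : ℤ) • i) / n) Filter.atTop
    (nhds (∑ k, ω k * (i k : ℝ)))

/-!
For `a b : ℤ^d`, comparing `τ_{b,l} x` with `x` at the origin fixes the direction of the
comparison for every integer `l` on either side of `x 0 - x b`; evaluating at `a` then shows that
`u i := x i - x 0` is quasi-additive with defect `1`. A real quasi-additive function `u` with
defect `C` on a commutative monoid stays within `C` of its homogenization `lim u (n • a) / n`,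
which exists by Fekete's lemma applied to the subadditive sequences `u (n • a) + C` and
`C - u (n • a)`, and which is additive. On `ℤ^d` an additive map is `⟨ω, ·⟩`, and this `ω` is
the rotation vector.
-/

open Filter Topology

theorem Subadditive.apply_le_mul_apply_one {u : ℕ → ℝ} (h : Subadditive u) {n : ℕ} (hn : n ≠ 0) :
    u n ≤ n * u 1 := by
  induction n with
  | zero => exact absurd rfl hn
  | succ n ih =>
    rcases eq_or_ne n 0 with rfl | hn'
    · simp
    · calc u (n + 1) ≤ u n + u 1 := h n 1
        _ ≤ n * u 1 + u 1 := by gcongr; exact ih hn'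
        _ = (n + 1 : ℕ) * u 1 := by push_cast; ring

def IsQuasiAdditive {G : Type*} [Add G] (u : G → ℝ) (C : ℝ) : Prop :=
  ∀ a b, |u (a + b) - u a - u b| ≤ C

noncomputable def homogenization {G : Type*} [AddMonoid G] (u : G → ℝ) (a : G) : ℝ :=
  limUnder atTop fun n : ℕ => u (n • a) / n

namespace IsQuasiAdditive

section AddMonoid

variable {G : Type*} [AddMonoid G] {u : G → ℝ} {C : ℝ}

theorem subadditive_add_const (hu : IsQuasiAdditive u C) (a : G) :
    Subadditive fun n : ℕ => u (n • a) + C := fun m n => by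
  have := (abs_le.1 (hu (m • a) (n • a))).2
  simp only [add_nsmul]
  linarith

theorem subadditive_const_sub (hu : IsQuasiAdditive u C) (a : G) :
    Subadditive fun n : ℕ => C - u (n • a) := fun m n => by
  have := (abs_le.1 (hu (m • a) (n • a))).1
  simp only [add_nsmul]
  linarith

theorem abs_nsmul_div_sub_le (hu : IsQuasiAdditive u C) (a : G) {n : ℕ} (hn : n ≠ 0) :
    |u (n • a) / n - u a| ≤ C := by
  have hC : 0 ≤ C := (abs_nonneg _).trans (hu a a)
  have hn' : (0 : ℝ) < n := by positivity
  have h₁ := (hu.subadditive_add_const a).apply_le_mul_apply_one hn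
  have h₂ := (hu.subadditive_const_sub a).apply_le_mul_apply_one hn
  simp only [one_smul] at h₁ h₂
  rw [div_sub' hn'.ne', abs_div, abs_of_pos hn', div_le_iff₀ hn', abs_le]
  constructor <;> linarith

theorem exists_tendsto_nsmul_div (hu : IsQuasiAdditive u C) (a : G) :
    ∃ L, Tendsto (fun n : ℕ => u (n • a) / n) atTop (𝓝 L) := by
  have hsub := hu.subadditive_add_const a
  have hbdd : BddBelow (Set.range fun n : ℕ => (u (n • a) + C) / n) := by
    refine ⟨min 0 (u a - C), Set.forall_mem_range.2 fun n => ?_⟩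
    rcases eq_or_ne n 0 with rfl | hn
    · simp
    · have hC : 0 ≤ C / n := div_nonneg ((abs_nonneg _).trans (hu a a)) n.cast_nonneg
      have := (abs_le.1 (hu.abs_nsmul_div_sub_le a hn)).1
      rw [add_div]
      exact (min_le_right _ _).trans (by linarith)
  refine ⟨hsub.lim, ?_⟩
  simpa [add_div] using (hsub.tendsto_lim hbdd).sub (tendsto_const_div_atTop_nhds_zero_nat C)

theorem tendsto_homogenization (hu : IsQuasiAdditive u C) (a : G) :
    Tendsto (fun n : ℕ => u (n • a) / n) atTop (𝓝 (homogenization u a)) :=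
  tendsto_nhds_limUnder (hu.exists_tendsto_nsmul_div a)

theorem abs_sub_homogenization_le (hu : IsQuasiAdditive u C) (a : G) :
    |u a - homogenization u a| ≤ C := by
  rw [abs_sub_comm]
  exact le_of_tendsto ((hu.tendsto_homogenization a).sub_const (u a)).abs
    ((eventually_ne_atTop 0).mono fun n hn => hu.abs_nsmul_div_sub_le a hn)

end AddMonoid

variable {G : Type*} [AddCommMonoid G] {u : G → ℝ} {C : ℝ}

theorem homogenization_add (hu : IsQuasiAdditive u C) (a b : G) :
    homogenization u (a + b) = homogenization u a + homogenization u b := by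
  have hlim := ((hu.tendsto_homogenization (a + b)).sub (hu.tendsto_homogenization a)).sub
    (hu.tendsto_homogenization b)
  have hzero : Tendsto (fun n : ℕ => u (n • (a + b)) / n - u (n • a) / n - u (n • b) / n)
      atTop (𝓝 0) := by
    refine squeeze_zero_norm (fun n => ?_) (tendsto_const_div_atTop_nhds_zero_nat C)
    rw [nsmul_add, ← sub_div, ← sub_div, norm_div, Real.norm_eq_abs, Real.norm_natCast]
    exact div_le_div_of_nonneg_right (hu _ _) n.cast_nonneg
  linarith [tendsto_nhds_unique hlim hzero]

noncomputable def homogenizationHom (hu : IsQuasiAdditive u C) : G →+ ℝ :=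
  AddMonoidHom.mk' (homogenization u) hu.homogenization_add

end IsQuasiAdditive

theorem AddMonoidHom.apply_eq_sum_apply_single_mul {ι : Type*} [Fintype ι] [DecidableEq ι]
    (φ : (ι → ℤ) →+ ℝ) (i : ι → ℤ) : φ i = ∑ k, φ (Pi.single k 1) * i k := by
  conv_lhs => rw [← Finset.univ_sum_single i, map_sum]
  refine Finset.sum_congr rfl fun k _ => ?_
  rw [mul_comm, ← zsmul_eq_mul, ← map_zsmul, ← Pi.single_smul', smul_eq_mul, mul_one]

theorem IsBirkhoff.isQuasiAdditive {d : ℕ} {x : (Fin d → ℤ) → ℝ} (hx : IsBirkhoff x) :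
    IsQuasiAdditive (fun i => x i - x 0) 1 := by
  intro a b
  have above (l : ℤ) (hl : x 0 < x b + l) : x a ≤ x (a + b) + l :=
    (hx b l).elim (fun h => absurd (h 0) (by simpa [tau] using hl)) fun h => by simpa [tau] using h a
  have below (l : ℤ) (hl : x b + l < x 0) : x (a + b) + l ≤ x a :=
    (hx b l).elim (fun h => by simpa [tau] using h a) fun h => absurd (h 0) (by simpa [tau] using hl)
  have h₁ := above (⌊x 0 - x b⌋ + 1) (by push_cast; linarith [Int.lt_floor_add_one (x 0 - x b)])
  have h₂ := below (⌈x 0 - x b⌉ - 1) (by push_cast; linarith [Int.ceil_lt_add_one (x 0 - x b)])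
  push_cast at h₁ h₂
  rw [abs_le]
  constructor <;> linarith [Int.floor_le (x 0 - x b), Int.le_ceil (x 0 - x b)]

theorem stmt0 {d : ℕ} (x : (Fin d → ℤ) → ℝ) (hx : IsBirkhoff x) :
    ∃ ω : Fin d → ℝ, HasRotVec x ω ∧
      ∀ i : Fin d → ℤ, |x i - x 0 - ∑ k, ω k * (i k : ℝ)| ≤ 1 := by
  have hu := hx.isQuasiAdditive
  let φ := hu.homogenizationHom
  refine ⟨fun k => φ (Pi.single k 1), fun i => ?_, fun i => ?_⟩
  · rw [← φ.apply_eq_sum_apply_single_mul]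
    have hlim := (hu.tendsto_homogenization i).add (tendsto_const_div_atTop_nhds_zero_nat (x 0))
    rw [add_zero] at hlim
    refine hlim.congr fun n => ?_
    rw [← add_div, sub_add_cancel, natCast_zsmul]
  · rw [← φ.apply_eq_sum_apply_single_mul]
    exact hu.abs_sub_homogenization_le i
end

section
/- Let d = 1 and let x : ℤ → ℝ be a Birkhoff sequence (for all k, l ∈ ℤ, either x_{i+k}+l ≥ x_i for all i, or x_{i+k}+l ≤ x_i for all i). Then the limit ω := lim_{n→∞} x_n/n exists and |x_i − x_0 − ωi| ≤ 1 for all i ∈ ℤ. -/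
/-- A bi-infinite sequence is Birkhoff if for all `k l : ℤ` the shifted sequence
`i ↦ a (i+k) + l` is everywhere `≤ a` or everywhere `≥ a`. -/
def BirkhoffSeq (a : ℤ → ℝ) : Prop :=
  ∀ k l : ℤ, (∀ i, a (i + k) + l ≤ a i) ∨ (∀ i, a i ≤ a (i + k) + l)

/-!
The Birkhoff property says that, for each length `k`, no integer separates two increments
`x (i + k) - x i` and `x (j + k) - x j`; hence all increments of length `k` lie within `1` of each
other. In particular `n ↦ x n - x 0 + 1` is subadditive, so Fekete's lemma gives the rotation
number `ω`. Telescoping `n` increments of length `k` traps `x (n * k) - x 0` between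
`n * (D - 1)` and `n * (D + 1)`, where `D` is any single increment of length `k`; dividing by `n`
and letting `n → ∞` gives `|D - ω * k| ≤ 1`.
-/

open Filter Set Topology

lemma sub_mem_Icc_of_forall_add_sub_mem_Icc {f : ℤ → ℝ} {k : ℤ} {a b : ℝ}
    (h : ∀ j, f (j + k) - f j ∈ Icc a b) (n : ℕ) :
    f (n * k) - f 0 ∈ Icc (n * a) (n * b) := by
  induction n with
  | zero => simp
  | succ n ih =>
    obtain ⟨hlo, hhi⟩ := h (n * k)
    simp only [Nat.cast_succ, add_one_mul]
    exact ⟨by linarith [ih.1], by linarith [ih.2]⟩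

lemma tendsto_sub_div_of_tendsto_div {f : ℤ → ℝ} {ω : ℝ}
    (hω : Tendsto (fun n : ℕ => f n / n) atTop (𝓝 ω)) {k : ℕ} (hk : 0 < k) :
    Tendsto (fun n : ℕ => (f (n * k) - f 0) / n) atTop (𝓝 (k * ω)) := by
  have hmul : Tendsto (fun n : ℕ => n * k) atTop atTop :=
    tendsto_id.atTop_mul_const' hk
  have hsub := ((hω.comp hmul).const_mul (k : ℝ)).sub
    (tendsto_const_div_atTop_nhds_zero_nat (f 0))
  rw [sub_zero] at hsub
  refine hsub.congr' ?_
  filter_upwards [eventually_ne_atTop 0] with n hn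
  simp only [Function.comp_apply, Nat.cast_mul]
  field_simp

namespace BirkhoffSeq

variable {x : ℤ → ℝ}

theorem add_sub_le_add_sub_add_one (hx : BirkhoffSeq x) (i j k : ℤ) :
    x (i + k) - x i ≤ x (j + k) - x j + 1 := by
  by_contra! h
  set m : ℤ := ⌊x (j + k) - x j⌋ + 1
  have hm_gt : x (j + k) - x j < m := by
    exact_mod_cast Int.lt_floor_add_one (x (j + k) - x j)
  have hm_le : (m : ℝ) ≤ x (j + k) - x j + 1 := by
    push_cast [m]
    linarith [Int.floor_le (x (j + k) - x j)]
  rcases hx k (-m) with hbelow | habove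
  · have := hbelow i
    push_cast at this
    linarith
  · have := habove j
    push_cast at this
    linarith

theorem add_sub_mem_Icc (hx : BirkhoffSeq x) (i j k : ℤ) :
    x (j + k) - x j ∈ Icc (x (i + k) - x i - 1) (x (i + k) - x i + 1) :=
  ⟨by linarith [hx.add_sub_le_add_sub_add_one i j k],
    hx.add_sub_le_add_sub_add_one j i k⟩

theorem subadditive (hx : BirkhoffSeq x) : Subadditive fun n : ℕ => x n - x 0 + 1 := by
  intro m n
  have := hx.add_sub_le_add_sub_add_one m 0 n
  push_cast
  rw [zero_add] at this
  linarith

theorem bddBelow_div (hx : BirkhoffSeq x) :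
    BddBelow (range fun n : ℕ => (x n - x 0 + 1) / n) := by
  refine ⟨min (x 1 - x 0 - 1) 0, ?_⟩
  rintro _ ⟨n, rfl⟩
  rcases n.eq_zero_or_pos with rfl | hn
  · simp
  have hn' : (0 : ℝ) < n := by exact_mod_cast hn
  have := (sub_mem_Icc_of_forall_add_sub_mem_Icc (hx.add_sub_mem_Icc 0 · 1) n).1
  simp only [zero_add, mul_one] at this
  refine (min_le_left _ _).trans ?_
  rw [le_div_iff₀ hn']
  linarith

theorem exists_tendsto_div (hx : BirkhoffSeq x) :
    ∃ ω : ℝ, Tendsto (fun n : ℕ => x n / n) atTop (𝓝 ω) := by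
  refine ⟨hx.subadditive.lim, ?_⟩
  have hsum := (hx.subadditive.tendsto_lim hx.bddBelow_div).add
    (tendsto_const_div_atTop_nhds_zero_nat (x 0 - 1))
  rw [add_zero] at hsum
  refine hsum.congr fun n => ?_
  rw [← add_div]
  ring_nf

theorem abs_add_sub_sub_mul_le (hx : BirkhoffSeq x) {ω : ℝ}
    (hω : Tendsto (fun n : ℕ => x n / n) atTop (𝓝 ω)) (i : ℤ) (k : ℕ) :
    |x (i + k) - x i - ω * k| ≤ 1 := by
  rcases k.eq_zero_or_pos with rfl | hk
  · simp
  set D := x (i + k) - x i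
  have hmem : ∀ᶠ n : ℕ in atTop, (x (n * k) - x 0) / n ∈ Icc (D - 1) (D + 1) := by
    filter_upwards [eventually_gt_atTop 0] with n hn
    have hn' : (0 : ℝ) < n := by exact_mod_cast hn
    obtain ⟨hlo, hhi⟩ := sub_mem_Icc_of_forall_add_sub_mem_Icc (hx.add_sub_mem_Icc i · k) n
    exact ⟨(le_div_iff₀ hn').2 (by linarith), (div_le_iff₀ hn').2 (by linarith)⟩
  obtain ⟨hlo, hhi⟩ :=
    isClosed_Icc.mem_of_tendsto (tendsto_sub_div_of_tendsto_div hω hk) hmem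
  rw [abs_le]
  constructor <;> linarith

end BirkhoffSeq

theorem stmt1 (x : ℤ → ℝ) (hx : BirkhoffSeq x) :
    ∃ ω : ℝ, Filter.Tendsto (fun n : ℕ => x n / n) Filter.atTop (nhds ω) ∧
      ∀ i : ℤ, |x i - x 0 - ω * i| ≤ 1 := by
  obtain ⟨ω, hω⟩ := hx.exists_tendsto_div
  refine ⟨ω, hω, fun i => ?_⟩
  obtain ⟨n, rfl | rfl⟩ := Int.eq_nat_or_neg i
  · simpa using hx.abs_add_sub_sub_mul_le hω 0 n
  · have := hx.abs_add_sub_sub_mul_le hω (-n) n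
    rw [neg_add_cancel, ← abs_neg] at this
    convert this using 2
    push_cast
    ring
end

section
/- Let ω ∈ ℝ^d and let x : ℤ^d → ℝ be a Birkhoff configuration with rotation vector ω. If k ∈ ℤ^d and l ∈ ℤ satisfy ⟨ω, k⟩ + l > 0, then τ_{k,l}x > x (i.e. τ_{k,l}x ≥ x pointwise and τ_{k,l}x ≠ x); and if ⟨ω, k⟩ + l < 0 then τ_{k,l}x < x. -/
open scoped BigOperators

open Filter

lemma aux_le {d : ℕ} (x : (Fin d → ℤ) → ℝ) (k : Fin d → ℤ) (l : ℤ) (S : ℝ)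
    (hlim : Tendsto (fun n : ℕ => x ((n : ℤ) • k) / n) atTop (nhds S))
    (h : ∀ i, x (i + k) + l ≤ x i) : S + l ≤ 0 := by
  have step : ∀ n : ℕ, x ((n : ℤ) • k) + n * (l : ℝ) ≤ x 0 := by
    intro n
    induction n with
    | zero => simp
    | succ n ih =>
      have h1 := h ((n : ℤ) • k)
      have e : ((n + 1 : ℕ) : ℤ) • k = (n : ℤ) • k + k := by
        push_cast; rw [add_smul, one_smul]
      rw [e]
      push_cast
      push_cast at ih
      linarith
  have hg : Tendsto (fun n : ℕ => x 0 / n) atTop (nhds 0) :=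
    tendsto_const_div_atTop_nhds_zero_nat (x 0)
  have hf : Tendsto (fun n : ℕ => x ((n : ℤ) • k) / n + l) atTop (nhds (S + l)) := by
    simpa using hlim.add (tendsto_const_nhds (x := (l : ℝ)))
  have hev : ∀ᶠ n : ℕ in atTop, x ((n : ℤ) • k) / n + l ≤ x 0 / n := by
    filter_upwards [eventually_ge_atTop 1] with n hn
    have hn' : (0 : ℝ) < n := by exact_mod_cast hn
    have hs := step n
    rw [div_add' _ _ _ hn'.ne']
    gcongr
    linarith
  exact le_of_tendsto_of_tendsto hf hg hev

lemma aux_ge {d : ℕ} (x : (Fin d → ℤ) → ℝ) (k : Fin d → ℤ) (l : ℤ) (S : ℝ)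
    (hlim : Tendsto (fun n : ℕ => x ((n : ℤ) • k) / n) atTop (nhds S))
    (h : ∀ i, x i ≤ x (i + k) + l) : 0 ≤ S + l := by
  have hlim' : Tendsto (fun n : ℕ => (-x ((n : ℤ) • k)) / n) atTop (nhds (-S)) := by
    simpa [neg_div] using hlim.neg
  have := aux_le (fun i => -x i) k (-l) (-S) hlim' (by
    intro i
    push_cast
    have := h i
    linarith)
  push_cast at this
  linarith

theorem stmt2 {d : ℕ} (x : (Fin d → ℤ) → ℝ) (hx : IsBirkhoff x)
    (ω : Fin d → ℝ) (hrot : HasRotVec x ω) (k : Fin d → ℤ) (l : ℤ) :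
    (0 < (∑ j, ω j * (k j : ℝ)) + l → x < tau k l x) ∧
    ((∑ j, ω j * (k j : ℝ)) + l < 0 → tau k l x < x) := by
  have hlim := hrot k
  constructor
  · intro hpos
    rcases hx k l with hle | hge
    · exact absurd (aux_le x k l _ hlim (fun i => hle i)) (by linarith)
    · refine lt_of_le_of_ne hge (fun heq => ?_)
      have hle : tau k l x ≤ x := heq.ge
      exact absurd (aux_le x k l _ hlim (fun i => hle i)) (by linarith)
  · intro hneg
    rcases hx k l with hle | hge
    · refine lt_of_le_of_ne hle (fun heq => ?_)
      have hge : x ≤ tau k l x := heq.ge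
      exact absurd (aux_ge x k l _ hlim (fun i => hge i)) (by linarith)
    · exact absurd (aux_ge x k l _ hlim (fun i => hge i)) (by linarith)
end

section
/- Let ω ∈ ℝ^d, let c = rank I_ω, and let (p_1,q_1),…,(p_c,q_c) ∈ I_ω be ℤ-linearly independent. Suppose x : ℤ^d → ℝ is a Birkhoff configuration with rotation vector ω satisfying τ_{p_j,q_j}x = x for all j = 1,…,c. Then x is maximally periodic: τ_{k,l}x = x for every (k,l) ∈ ℤ^d × ℤ with ⟨ω,k⟩ + l = 0. -/
open scoped BigOperators

/-- The lattice `I_ω = {(k,l) ∈ ℤ^d × ℤ : ⟨ω,k⟩ + l = 0}`, as a `ℤ`-submodule of `ℤ^d × ℤ`. -/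
def Iomega {d : ℕ} (ω : Fin d → ℝ) : Submodule ℤ ((Fin d → ℤ) × ℤ) where
  carrier := {p | (∑ k, ω k * (p.1 k : ℝ)) + (p.2 : ℝ) = 0}
  zero_mem' := by simp
  add_mem' := by
    intro a b ha hb
    simp only [Set.mem_setOf_eq] at *
    have : (∑ k, ω k * (((a.1 + b.1) k : ℤ) : ℝ)) =
        (∑ k, ω k * (a.1 k : ℝ)) + (∑ k, ω k * (b.1 k : ℝ)) := by
      rw [← Finset.sum_add_distrib]
      refine Finset.sum_congr rfl fun k _ => ?_
      push_cast [Pi.add_apply]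
      ring
    simp only [Prod.fst_add, Prod.snd_add] at *
    push_cast
    push_cast at this
    linarith [ha, hb]
  smul_mem' := by
    intro c a ha
    simp only [Set.mem_setOf_eq] at *
    have : (∑ k, ω k * (((c • a.1) k : ℤ) : ℝ)) = (c : ℝ) * ∑ k, ω k * (a.1 k : ℝ) := by
      rw [Finset.mul_sum]
      refine Finset.sum_congr rfl fun k _ => ?_
      push_cast [Pi.smul_apply, smul_eq_mul]
      ring
    simp only [Prod.smul_fst, Prod.smul_snd, smul_eq_mul] at *
    push_cast
    push_cast at this
    rw [this, ← mul_add, ha, mul_zero]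

/-!
Adding `(k, l)` to the `c` independent periods `(p_j, q_j)` of the rank-`c` lattice `I_ω` gives a
dependent family, so some nonzero multiple `n • (k, l)` lies in their span and is a period of `x`.
Since `τ_{k,l}` is monotone and `x` is comparable with `τ_{k,l} x`, the orbit `(τ_{k,l})^[m] x` is
monotone in `m`, so `(τ_{k,l})^[n] x = x` with `n ≠ 0` forces `τ_{k,l} x = x`.
-/

open Function Submodule

theorem Monotone.isFixedPt_of_isPeriodicPt {α : Type*} [PartialOrder α] {f : α → α}
    (hf : Monotone f) {x : α} (hx : x ≤ f x ∨ f x ≤ x) {n : ℕ} (hn : n ≠ 0)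
    (hper : IsPeriodicPt f n x) : IsFixedPt f x := by
  have h1 : 1 ≤ n := Nat.one_le_iff_ne_zero.mpr hn
  rcases hx with hle | hge
  · exact le_antisymm ((hf.monotone_iterate_of_le_map hle h1).trans_eq hper) hle
  · exact le_antisymm hge (hper.symm.trans_le (hf.antitone_iterate_of_map_le hge h1))

theorem LinearIndependent.exists_smul_mem_span {R M : Type*} [Ring R] [StrongRankCondition R]
    [AddCommGroup M] [Module R M] [Module.Finite R M] {c : ℕ} {v : Fin c → M}
    (hv : LinearIndependent R v) (hc : Module.finrank R M = c) (w : M) :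
    ∃ a : R, a ≠ 0 ∧ a • w ∈ span R (Set.range v) := by
  have hdep : ¬ LinearIndependent R (Fin.cons w v : Fin c.succ → M) := fun h => by
    simpa [hc] using h.fintype_card_le_finrank
  by_contra! h
  refine hdep (LinearIndependent.finCons' w v hv fun a y hy hsum => ?_)
  by_contra ha
  exact h a ha (by rw [eq_neg_of_add_eq_zero_left hsum]; exact neg_mem hy)

theorem Submodule.exists_smul_mem_span_of_finrank_eq {R M : Type*} [Ring R]
    [StrongRankCondition R] [AddCommGroup M] [Module R M] (L : Submodule R M) [Module.Finite R L]
    {c : ℕ} (hc : Module.finrank R L = c) {v : Fin c → M} (hvL : ∀ j, v j ∈ L)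
    (hv : LinearIndependent R v) {w : M} (hw : w ∈ L) :
    ∃ a : R, a ≠ 0 ∧ a • w ∈ span R (Set.range v) := by
  have hvL' : LinearIndependent R fun j => (⟨v j, hvL j⟩ : L) := .of_comp L.subtype hv
  obtain ⟨a, ha, hmem⟩ := hvL'.exists_smul_mem_span hc ⟨w, hw⟩
  refine ⟨a, ha, ?_⟩
  have := mem_map_of_mem (f := L.subtype) hmem
  rwa [map_span, ← Set.range_comp] at this

section Shift

variable {d : ℕ}

theorem tau_zero (x : (Fin d → ℤ) → ℝ) : tau 0 0 x = x := by
  funext i; simp [tau]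

theorem tau_add (k k' : Fin d → ℤ) (l l' : ℤ) (x : (Fin d → ℤ) → ℝ) :
    tau (k + k') (l + l') x = tau k l (tau k' l' x) := by
  funext i
  simp only [tau, ← add_assoc, add_right_comm i k k', Int.cast_add]
  ring

theorem tau_monotone (k : Fin d → ℤ) (l : ℤ) : Monotone (tau k l) :=
  fun _ _ h i => by simpa [tau] using h (i + k)

theorem tau_iterate (k : Fin d → ℤ) (l : ℤ) (n : ℕ) (x : (Fin d → ℤ) → ℝ) :
    (tau k l)^[n] x = tau (n • k) (n • l) x := by
  induction n with
  | zero => simp [tau_zero]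
  | succ n ih => rw [iterate_succ_apply', ih, succ_nsmul', succ_nsmul', tau_add]

def periods (x : (Fin d → ℤ) → ℝ) : AddSubgroup ((Fin d → ℤ) × ℤ) where
  carrier := {v | tau v.1 v.2 x = x}
  zero_mem' := tau_zero x
  add_mem' {v w} hv hw := by
    change tau _ _ x = x at hv hw ⊢
    rw [Prod.fst_add, Prod.snd_add, tau_add, hw, hv]
  neg_mem' {v} hv := by
    change tau _ _ x = x at hv ⊢
    calc tau (-v.1) (-v.2) x = tau (-v.1) (-v.2) (tau v.1 v.2 x) := by rw [hv]
      _ = x := by rw [← tau_add, neg_add_cancel, neg_add_cancel, tau_zero]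

theorem IsBirkhoff.mem_periods_of_nsmul_mem {x : (Fin d → ℤ) → ℝ} (hx : IsBirkhoff x)
    {n : ℕ} (hn : n ≠ 0) {v : (Fin d → ℤ) × ℤ} (h : n • v ∈ periods x) : v ∈ periods x := by
  refine (tau_monotone v.1 v.2).isFixedPt_of_isPeriodicPt (hx v.1 v.2).symm hn ?_
  rwa [IsPeriodicPt, IsFixedPt, tau_iterate]

theorem IsBirkhoff.mem_periods_of_zsmul_mem {x : (Fin d → ℤ) → ℝ} (hx : IsBirkhoff x)
    {a : ℤ} (ha : a ≠ 0) {v : (Fin d → ℤ) × ℤ} (h : a • v ∈ periods x) : v ∈ periods x := by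
  refine hx.mem_periods_of_nsmul_mem (Int.natAbs_ne_zero.mpr ha) ?_
  rcases Int.natAbs_eq a with e | e
  · rwa [e, natCast_zsmul] at h
  · rwa [e, neg_smul, neg_mem_iff, natCast_zsmul] at h

end Shift

theorem stmt6_general {d : ℕ} (ω : Fin d → ℝ) (c : ℕ) (hc : Module.finrank ℤ (Iomega ω) = c)
    (p : Fin c → Fin d → ℤ) (q : Fin c → ℤ)
    (hmem : ∀ j, ((p j, q j) : (Fin d → ℤ) × ℤ) ∈ Iomega ω)
    (hind : LinearIndependent ℤ (fun j => ((p j, q j) : (Fin d → ℤ) × ℤ)))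
    (x : (Fin d → ℤ) → ℝ) (hB : IsBirkhoff x)
    (hper : ∀ j, tau (p j) (q j) x = x) :
    ∀ (k : Fin d → ℤ) (l : ℤ), (∑ m, ω m * (k m : ℝ)) + (l : ℝ) = 0 → tau k l x = x := by
  intro k l hkl
  obtain ⟨a, ha, hspan⟩ :=
    (Iomega ω).exists_smul_mem_span_of_finrank_eq hc hmem hind (w := (k, l)) hkl
  have hperiods : span ℤ (Set.range fun j => ((p j, q j) : (Fin d → ℤ) × ℤ)) ≤
      (periods x).toIntSubmodule :=
    span_le.mpr (by rintro _ ⟨j, rfl⟩; exact hper j)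
  exact hB.mem_periods_of_zsmul_mem ha (hperiods hspan)

theorem stmt6 {d : ℕ} (ω : Fin d → ℝ) (c : ℕ) (hc : Module.finrank ℤ (Iomega ω) = c)
    (p : Fin c → Fin d → ℤ) (q : Fin c → ℤ)
    (hmem : ∀ j, ((p j, q j) : (Fin d → ℤ) × ℤ) ∈ Iomega ω)
    (hind : LinearIndependent ℤ (fun j => ((p j, q j) : (Fin d → ℤ) × ℤ)))
    (x : (Fin d → ℤ) → ℝ) (hB : IsBirkhoff x) (hrot : HasRotVec x ω)
    (hper : ∀ j, tau (p j) (q j) x = x) :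
    ∀ (k : Fin d → ℤ) (l : ℤ), (∑ m, ω m * (k m : ℝ)) + (l : ℝ) = 0 → tau k l x = x :=
  stmt6_general ω c hc p q hmem hind x hB hper
end

section
/- Let ω = (a_1/b_1, …, a_d/b_d) ∈ ℚ^d be rational and let (p_1,q_1),…,(p_d,q_d) ∈ ℤ^d × ℤ be linearly independent with ⟨ω, p_j⟩ + q_j = 0 for all j. Write n := |det p| where p is the matrix with columns p_j. If x : ℤ^d → ℝ satisfies τ_{p_j,q_j}x = x for all j, then for every (k,l) ∈ ℤ^d × ℤ with ⟨ω,k⟩ + l ≠ 0 one has Σ_{i ∈ B_p} |(τ_{k,l}x − x)_i| ≥ 1, where B_p := p([0,1)^d) ∩ ℤ^d. -/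
open scoped BigOperators

/-!
`B_p` is a set of representatives of `ℤ^d` modulo the lattice `p ℤ^d`, so a `p ℤ^d`-periodic
function has the same sum over `B_p` and over its translate `B_p + k`. Two functions are periodic:
`x - ⟨ω, ·⟩`, because `⟨ω, p_j⟩ = -q_j`, which gives
`S := ∑_{i ∈ B_p} (τ_{k,l} x - x)_i = |B_p| (⟨ω, k⟩ + l) ≠ 0`; and the fractional part of `x`, which
shows that `S` is an integer. Hence `1 ≤ |S| ≤ ∑_{i ∈ B_p} |(τ_{k,l} x - x)_i|`.
-/

open Finset Function Matrix

theorem AddSubgroup.IsComplement.sum_comp_mk {G M : Type*} [AddCommGroup G] [AddCommMonoid M]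
    {L : AddSubgroup G} {B : Finset G} (hB : AddSubgroup.IsComplement (B : Set G) L)
    [Fintype (G ⧸ L)] (F : G ⧸ L → M) :
    ∑ b ∈ B, F b = ∑ c, F c := by
  rw [← Finset.sum_coe_sort B]
  exact Fintype.sum_equiv hB.leftQuotientEquiv.symm _ _ fun _ => rfl

theorem AddSubgroup.IsComplement.sum_comp_add_right {G M : Type*} [AddCommGroup G]
    [AddCommMonoid M] {L : AddSubgroup G} {B : Finset G}
    (hB : AddSubgroup.IsComplement (B : Set G) L) {f : G → M} (hf : ∀ u ∈ L, Periodic f u)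
    (k : G) : ∑ b ∈ B, f (b + k) = ∑ b ∈ B, f b := by
  let e := hB.leftQuotientEquiv
  let _ : Fintype (G ⧸ L) := Fintype.ofEquiv _ e.symm
  have hf_rep : ∀ v : G, f v = f (e v) := fun v => by
    have h : -(e v : G) + v ∈ L :=
      QuotientAddGroup.eq.mp (hB.quotientAddGroupMk_leftQuotientEquiv v)
    rw [← hf _ h (e v), add_neg_cancel_left]
  calc ∑ b ∈ B, f (b + k) = ∑ b ∈ B, f (e ((b : G ⧸ L) + k)) :=
        sum_congr rfl fun b _ => by rw [hf_rep (b + k), QuotientAddGroup.mk_add]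
    _ = ∑ c, f (e (c + k)) := hB.sum_comp_mk fun c => f (e (c + k))
    _ = ∑ c, f (e c) := Equiv.sum_comp (Equiv.addRight (k : G ⧸ L)) fun c => f (e c)
    _ = ∑ b ∈ B, f b := by rw [← hB.sum_comp_mk]; exact sum_congr rfl fun b _ => (hf_rep b).symm

namespace Matrix

theorem periodic_mulVec {m n α : Type*} [Fintype n] {f : (m → ℤ) → α} {p : Matrix m n ℤ}
    (h : ∀ j, Periodic f (pᵀ j)) (v : n → ℤ) : Periodic f (p *ᵥ v) := by
  have hsum : p *ᵥ v = ∑ j, v j • pᵀ j := by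
    ext i
    simp [mulVec, dotProduct, mul_comm]
  rw [hsum]
  exact sum_induction _ (Periodic f) (fun _ _ => Periodic.add_period)
    (fun x => congrArg f (add_zero x)) fun j _ => (h j).zsmul _

theorem sum_comp_add_right_of_periodic_cols {m n M : Type*} [Fintype n] [AddCommMonoid M]
    {p : Matrix m n ℤ} {B : Finset (m → ℤ)}
    (hB : AddSubgroup.IsComplement (B : Set (m → ℤ)) p.mulVecLin.toAddMonoidHom.range)
    {f : (m → ℤ) → M} (hf : ∀ j, Periodic f (pᵀ j)) (k : m → ℤ) :
    ∑ i ∈ B, f (i + k) = ∑ i ∈ B, f i :=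
  hB.sum_comp_add_right (fun _ ⟨v, hv⟩ => hv ▸ periodic_mulVec hf v) k

theorem intCast_comp_mulVec {m n : Type*} [Fintype n] (p : Matrix m n ℤ) (v : n → ℤ) :
    (Int.cast ∘ (p *ᵥ v) : m → ℝ) = p.map Int.cast *ᵥ (Int.cast ∘ v) :=
  funext fun i => RingHom.map_mulVec (Int.castRingHom ℝ) p v i

variable {n : Type*} [Fintype n] {p : Matrix n n ℤ}

def fundamentalBox (p : Matrix n n ℤ) : Set (n → ℤ) :=
  {i | ∃ t : n → ℝ, (∀ j, t j ∈ Set.Ico 0 1) ∧ Int.cast ∘ i = p.map Int.cast *ᵥ t}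

variable [DecidableEq n]

theorem isUnit_map_intCast (hp : p.det ≠ 0) : IsUnit (p.map (Int.cast : ℤ → ℝ)) := by
  rw [isUnit_iff_isUnit_det, isUnit_iff_ne_zero, ← Int.cast_det]
  exact_mod_cast hp

theorem exists_sub_mulVec_mem_fundamentalBox (hp : p.det ≠ 0) (v : n → ℤ) :
    ∃ m, v - p *ᵥ m ∈ fundamentalBox p := by
  obtain ⟨s, hs⟩ := mulVec_surjective_iff_isUnit.2 (isUnit_map_intCast hp) (Int.cast ∘ v)
  refine ⟨fun j => ⌊s j⌋, fun j => Int.fract (s j),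
    fun j => ⟨Int.fract_nonneg _, Int.fract_lt_one _⟩, ?_⟩
  rw [show (fun j => Int.fract (s j)) = s - Int.cast ∘ fun j => ⌊s j⌋ from rfl, mulVec_sub, hs,
    ← intCast_comp_mulVec]
  ext i
  simp

theorem eq_of_sub_eq_mulVec_of_mem_fundamentalBox (hp : p.det ≠ 0) {b b' : n → ℤ}
    (hb : b ∈ fundamentalBox p) (hb' : b' ∈ fundamentalBox p) {m : n → ℤ}
    (h : b' - b = p *ᵥ m) : b = b' := by
  obtain ⟨t, ht, hbt⟩ := hb
  obtain ⟨t', ht', hbt'⟩ := hb'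
  have hdiff : t' - t = Int.cast ∘ m := by
    refine mulVec_injective_iff_isUnit.2 (isUnit_map_intCast hp) ?_
    rw [mulVec_sub, ← hbt, ← hbt', ← intCast_comp_mulVec, ← h]
    ext i
    simp
  have hm : m = 0 := funext fun j => by
    have hj : t' j - t j = m j := congrFun hdiff j
    have h1 : (-1 : ℝ) < m j := by linarith [(ht j).2, (ht' j).1]
    have h2 : (m j : ℝ) < 1 := by linarith [(ht j).1, (ht' j).2]
    have : -1 < m j ∧ m j < 1 := ⟨by exact_mod_cast h1, by exact_mod_cast h2⟩
    show m j = 0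
    omega
  rw [hm, mulVec_zero, sub_eq_zero] at h
  exact h.symm

theorem isComplement_fundamentalBox (hp : p.det ≠ 0) :
    AddSubgroup.IsComplement (fundamentalBox p) p.mulVecLin.toAddMonoidHom.range := by
  refine AddSubgroup.isComplement_iff_existsUnique_neg_add_mem.2 fun v => ?_
  obtain ⟨m, hm⟩ := exists_sub_mulVec_mem_fundamentalBox hp v
  refine ⟨⟨_, hm⟩, ⟨m, by simp⟩, ?_⟩
  rintro ⟨b, hb⟩ ⟨m', hm'⟩
  refine Subtype.ext (eq_of_sub_eq_mulVec_of_mem_fundamentalBox hp hb hm (m := m' - m) ?_)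
  simp only [LinearMap.toAddMonoidHom_coe, mulVecLin_apply, mulVec_sub] at hm' ⊢
  rw [hm']
  abel

theorem det_ne_zero_of_linearIndependent (ω : n → ℝ) (q : n → ℤ)
    (hind : LinearIndependent ℤ (fun j => ((fun k => p k j, q j) : (n → ℤ) × ℤ)))
    (hpq : ∀ j, (∑ k, ω k * (p k j : ℝ)) + (q j : ℝ) = 0) : p.det ≠ 0 := by
  intro h
  obtain ⟨c, hc0, hc⟩ := exists_mulVec_eq_zero_iff.2 h
  refine hc0 (funext (Fintype.linearIndependent_iff.1 hind c ?_))
  have hq' : (Int.cast ∘ q : n → ℝ) = -(ω ᵥ* p.map Int.cast) :=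
    funext fun j => eq_neg_of_add_eq_zero_right (hpq j)
  have hcq : ((∑ j, c j * q j : ℤ) : ℝ) = 0 := by
    calc ((∑ j, c j * q j : ℤ) : ℝ) = (Int.cast ∘ c) ⬝ᵥ (Int.cast ∘ q) := by
          push_cast [dotProduct]; rfl
      _ = -(ω ⬝ᵥ (Int.cast ∘ (p *ᵥ c))) := by
          rw [hq', dotProduct_comm, neg_dotProduct, ← dotProduct_mulVec, intCast_comp_mulVec]
      _ = 0 := by simp [hc]
  refine Prod.ext ?_ ?_
  · simp only [Prod.fst_sum, Prod.smul_fst, Prod.fst_zero]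
    rw [← hc]
    ext i
    simp [mulVec, dotProduct, mul_comm]
  · simp only [Prod.snd_sum, Prod.smul_snd, smul_eq_mul, Prod.snd_zero]
    exact_mod_cast hcq

end Matrix

section Shift

variable {d : ℕ} {ι : Type*} [Fintype ι] {p : Matrix (Fin d) ι ℤ} {q : ι → ℤ}
  {B : Finset (Fin d → ℤ)} {x : (Fin d → ℤ) → ℝ}

theorem apply_add_of_tau_eq {k : Fin d → ℤ} {l : ℤ} (h : tau k l x = x) (v : Fin d → ℤ) :
    x (v + k) = x v - l := by
  rw [← congrFun h v, tau]
  ring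

theorem sum_tau_sub_eq_card_mul (ω : Fin d → ℝ)
    (hB : AddSubgroup.IsComplement (B : Set (Fin d → ℤ)) p.mulVecLin.toAddMonoidHom.range)
    (hpq : ∀ j, (∑ m, ω m * (p m j : ℝ)) + (q j : ℝ) = 0) (hper : ∀ j, tau (pᵀ j) (q j) x = x)
    (k : Fin d → ℤ) (l : ℤ) :
    ∑ i ∈ B, (tau k l x i - x i) = #B * ((∑ m, ω m * (k m : ℝ)) + l) := by
  set W : (Fin d → ℤ) → ℝ := fun v => ∑ m, ω m * (v m : ℝ)
  have hW_add : ∀ u v, W (u + v) = W u + W v := fun u v => by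
    simp only [W, Pi.add_apply, Int.cast_add, mul_add, sum_add_distrib]
  have hW_col : ∀ j, W (pᵀ j) = -q j := fun j => eq_neg_of_add_eq_zero_left (hpq j)
  have hshift := sum_comp_add_right_of_periodic_cols hB (f := fun v => x v - W v) (fun j v => by
    simp only [apply_add_of_tau_eq (hper j), hW_add, hW_col]
    ring) k
  calc ∑ i ∈ B, (tau k l x i - x i)
      = ∑ i ∈ B, ((x (i + k) - W (i + k) - (x i - W i)) + (W k + l)) :=
        sum_congr rfl fun i _ => by simp only [tau, hW_add]; ring
    _ = #B * (W k + l) := by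
        rw [sum_add_distrib, sum_sub_distrib, hshift, sub_self, sum_const, nsmul_eq_mul, zero_add]

theorem exists_sum_tau_sub_eq_intCast
    (hB : AddSubgroup.IsComplement (B : Set (Fin d → ℤ)) p.mulVecLin.toAddMonoidHom.range)
    (hper : ∀ j, tau (pᵀ j) (q j) x = x) (k : Fin d → ℤ) (l : ℤ) :
    ∃ N : ℤ, ∑ i ∈ B, (tau k l x i - x i) = N := by
  have hshift := sum_comp_add_right_of_periodic_cols hB (f := fun v => Int.fract (x v))
    (fun j v => by simp only [apply_add_of_tau_eq (hper j), Int.fract_sub_intCast]) k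
  refine ⟨∑ i ∈ B, (⌊x (i + k)⌋ - ⌊x i⌋ + l), ?_⟩
  calc ∑ i ∈ B, (tau k l x i - x i)
      = ∑ i ∈ B, ((Int.fract (x (i + k)) - Int.fract (x i))
          + ((⌊x (i + k)⌋ - ⌊x i⌋ + l : ℤ) : ℝ)) :=
        sum_congr rfl fun i _ => by simp only [tau, Int.fract]; push_cast; ring
    _ = _ := by rw [sum_add_distrib, sum_sub_distrib, hshift, sub_self, zero_add, Int.cast_sum]

end Shift

theorem stmt7_general {d : ℕ} (ω : Fin d → ℝ)
    (p : Matrix (Fin d) (Fin d) ℤ) (q : Fin d → ℤ)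
    (hind : LinearIndependent ℤ (fun j => ((fun k => p k j, q j) : (Fin d → ℤ) × ℤ)))
    (hI : ∀ j, (∑ k, ω k * (p k j : ℝ)) + (q j : ℝ) = 0)
    (B : Finset (Fin d → ℤ))
    (hB : ∀ i : Fin d → ℤ, i ∈ B ↔ ∃ t : Fin d → ℝ,
      (∀ m, 0 ≤ t m ∧ t m < 1) ∧ ∀ m, (i m : ℝ) = ∑ j, (p m j : ℝ) * t j)
    (x : (Fin d → ℤ) → ℝ) (hper : ∀ j, tau (fun k => p k j) (q j) x = x)
    (k : Fin d → ℤ) (l : ℤ) (hkl : (∑ m, ω m * (k m : ℝ)) + (l : ℝ) ≠ 0) :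
    1 ≤ ∑ i ∈ B, |tau k l x i - x i| := by
  have hcompl : AddSubgroup.IsComplement (B : Set (Fin d → ℤ))
      p.mulVecLin.toAddMonoidHom.range := by
    have hBox : (B : Set (Fin d → ℤ)) = p.fundamentalBox :=
      Set.ext fun i => (hB i).trans (exists_congr fun _ => and_congr Iff.rfl funext_iff.symm)
    rw [hBox]
    exact isComplement_fundamentalBox (det_ne_zero_of_linearIndependent ω q hind hI)
  obtain ⟨N, hN⟩ := exists_sum_tau_sub_eq_intCast hcompl hper k l
  have hB0 : (0 : Fin d → ℤ) ∈ B := (hB 0).2 ⟨0, fun _ => ⟨le_rfl, zero_lt_one⟩, fun _ => by simp⟩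
  have hN0 : (N : ℝ) ≠ 0 := by
    rw [← hN, sum_tau_sub_eq_card_mul ω hcompl hI hper]
    exact mul_ne_zero (Nat.cast_ne_zero.2 (card_ne_zero_of_mem hB0)) hkl
  calc (1 : ℝ) ≤ |(N : ℝ)| := by exact_mod_cast Int.one_le_abs (by exact_mod_cast hN0)
    _ = |∑ i ∈ B, (tau k l x i - x i)| := by rw [hN]
    _ ≤ ∑ i ∈ B, |tau k l x i - x i| := abs_sum_le_sum_abs _ _

theorem stmt7 {d : ℕ} (ω : Fin d → ℝ) (hrat : ∀ k, ∃ r : ℚ, ω k = (r : ℝ))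
    (p : Matrix (Fin d) (Fin d) ℤ) (q : Fin d → ℤ)
    (hind : LinearIndependent ℤ (fun j => ((fun k => p k j, q j) : (Fin d → ℤ) × ℤ)))
    (hI : ∀ j, (∑ k, ω k * (p k j : ℝ)) + (q j : ℝ) = 0)
    (B : Finset (Fin d → ℤ))
    (hB : ∀ i : Fin d → ℤ, i ∈ B ↔ ∃ t : Fin d → ℝ,
      (∀ m, 0 ≤ t m ∧ t m < 1) ∧ ∀ m, (i m : ℝ) = ∑ j, (p m j : ℝ) * t j)
    (x : (Fin d → ℤ) → ℝ) (hper : ∀ j, tau (fun k => p k j) (q j) x = x)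
    (k : Fin d → ℤ) (l : ℤ) (hkl : (∑ m, ω m * (k m : ℝ)) + (l : ℝ) ≠ 0) :
    1 ≤ ∑ i ∈ B, |tau k l x i - x i| :=
  stmt7_general ω p q hind hI B hB x hper k l hkl
end

section
/- (Minimum–maximum property) Let W : ℝ^B → ℝ, W(x) = Σ_{j∈J} S_j(x), be a finite sum of C² functions on a finite-dimensional space satisfying the twist condition ∂²W/∂x_i∂x_k ≤ 0 for all i ≠ k. If x and y both minimize W, then min{x,y} (componentwise) and max{x,y} also minimize W; in particular W(x) + W(y) ≥ W(max{x,y}) + W(min{x,y}) for all x, y. -/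
/-!
With `m = x ⊓ y`, the increments `u = x - m` and `v = y - m` are nonnegative with disjoint
supports, and `x ⊔ y = m + u + v`. By bilinearity `D²W(v, u)` is then a nonnegative
combination of off-diagonal entries `∂ᵢ∂ₖW` (the diagonal terms carry `uᵢ vᵢ = 0`), so it is
`≤ 0`. Hence `DW · u` decreases along `v`, so `W (· + v) - W` decreases along `u`, which is
`W (m + u + v) + W m ≤ W (m + u) + W (m + v)`. Submodularity then makes the meet and join of
two minimizers minimizers.
-/

open Finset

theorem ContinuousLinearMap.apply_apply_eq_sum_single {ι : Type*} [Fintype ι] [DecidableEq ι]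
    (A : (ι → ℝ) →L[ℝ] (ι → ℝ) →L[ℝ] ℝ) (u v : ι → ℝ) :
    A u v = ∑ i, ∑ k, u i * v k * A (Pi.single i 1) (Pi.single k 1) := by
  have hsingle : ∀ (i : ι) (a : ℝ), Pi.single i a = a • Pi.single i (1 : ℝ) := fun i a => by
    rw [← Pi.single_smul', smul_eq_mul, mul_one]
  conv_lhs => rw [← univ_sum_single u, ← univ_sum_single v]
  simp only [map_sum, _root_.sum_apply, hsingle _ (u _), hsingle _ (v _), map_smul,
    _root_.smul_apply, smul_eq_mul, mul_sum]
  rw [sum_comm]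
  exact sum_congr rfl fun i _ => sum_congr rfl fun k _ => by ring

theorem ContinuousLinearMap.apply_apply_nonpos_of_disjoint {ι : Type*} [Fintype ι] [DecidableEq ι]
    (A : (ι → ℝ) →L[ℝ] (ι → ℝ) →L[ℝ] ℝ)
    (hA : ∀ i k, i ≠ k → A (Pi.single i 1) (Pi.single k 1) ≤ 0)
    {u v : ι → ℝ} (hu : 0 ≤ u) (hv : 0 ≤ v) (huv : ∀ i, u i * v i = 0) : A u v ≤ 0 := by
  rw [A.apply_apply_eq_sum_single]
  refine sum_nonpos fun i _ => sum_nonpos fun k _ => ?_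
  rcases eq_or_ne i k with rfl | hik
  · simp [huv]
  · exact mul_nonpos_of_nonneg_of_nonpos (mul_nonneg (hu i) (hv k)) (hA i k hik)

section
variable {E : Type*} [NormedAddCommGroup E] [NormedSpace ℝ E] {f : E → ℝ}

theorem le_of_fderiv_apply_nonpos (hf : Differentiable ℝ f) {v : E}
    (h : ∀ z, fderiv ℝ f z v ≤ 0) (x : E) : f (x + v) ≤ f x := by
  have hline : ∀ t : ℝ, HasDerivAt (fun t : ℝ => f (x + t • v)) (fderiv ℝ f (x + t • v) v) t :=
    fun t => (hf _).hasFDerivAt.comp_hasDerivAt t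
      (by simpa using ((hasDerivAt_id t).smul_const v).const_add x)
  have hanti : Antitone fun t : ℝ => f (x + t • v) :=
    antitone_of_deriv_nonpos (fun t => (hline t).differentiableAt)
      fun t => (hline t).deriv ▸ h _
  simpa using hanti zero_le_one

theorem fderiv_apply_add_le_of_fderiv_fderiv_nonpos (hf : Differentiable ℝ (fderiv ℝ f)) {u v : E}
    (h : ∀ z, fderiv ℝ (fderiv ℝ f) z v u ≤ 0) (x : E) :
    fderiv ℝ f (x + v) u ≤ fderiv ℝ f x u := by
  have hderiv : ∀ z, HasFDerivAt (fun z => fderiv ℝ f z u)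
      ((fderiv ℝ (fderiv ℝ f) z).flip u) z := fun z => by
    simpa using (hf z).hasFDerivAt.clm_apply (hasFDerivAt_const u z)
  exact le_of_fderiv_apply_nonpos (fun z => (hderiv z).differentiableAt)
    (fun z => (hderiv z).fderiv ▸ h z) x

theorem add_add_le_of_fderiv_fderiv_nonpos (hf : Differentiable ℝ f)
    (hf' : Differentiable ℝ (fderiv ℝ f)) {u v : E}
    (h : ∀ z, fderiv ℝ (fderiv ℝ f) z v u ≤ 0) (x : E) :
    f (x + u + v) + f x ≤ f (x + u) + f (x + v) := by
  have hdiff : ∀ z, HasFDerivAt (fun z => f (z + v) - f z)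
      (fderiv ℝ f (z + v) - fderiv ℝ f z) z := fun z =>
    ((hasFDerivAt_comp_add_right v).2 (hf _).hasFDerivAt).sub (hf z).hasFDerivAt
  have := le_of_fderiv_apply_nonpos (fun z => (hdiff z).differentiableAt) (v := u)
    (fun z => by
      rw [(hdiff z).fderiv, _root_.sub_apply, sub_nonpos]
      exact fderiv_apply_add_le_of_fderiv_fderiv_nonpos hf' h z) x
  linarith
end

theorem submodular_of_fderiv_fderiv_single_nonpos {ι : Type*} [Fintype ι] [DecidableEq ι]
    {f : (ι → ℝ) → ℝ} (hf : Differentiable ℝ f) (hf' : Differentiable ℝ (fderiv ℝ f))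
    (htwist : ∀ z i k, i ≠ k → fderiv ℝ (fderiv ℝ f) z (Pi.single i 1) (Pi.single k 1) ≤ 0)
    (x y : ι → ℝ) : f (x ⊔ y) + f (x ⊓ y) ≤ f x + f y := by
  have hdisj : ∀ i, (y - x ⊓ y) i * (x - x ⊓ y) i = 0 := fun i => by
    rcases le_total (x i) (y i) with h | h <;> simp [h]
  have hsup : x ⊓ y + (x - x ⊓ y) + (y - x ⊓ y) = x ⊔ y := by
    rw [← add_sub_cancel_left (x ⊓ y) (x ⊔ y), inf_add_sup]
    abel
  have key := add_add_le_of_fderiv_fderiv_nonpos hf hf'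
    (fun z => (fderiv ℝ (fderiv ℝ f) z).apply_apply_nonpos_of_disjoint (htwist z)
      (sub_nonneg.2 inf_le_right) (sub_nonneg.2 inf_le_left) hdisj) (x ⊓ y)
  rw [hsup, add_sub_cancel, add_sub_cancel] at key
  linarith

theorem stmt9 {ι κ : Type*} [Fintype ι] [DecidableEq ι] (J : Finset κ) (S : κ → (ι → ℝ) → ℝ)
    (hS : ∀ j ∈ J, ContDiff ℝ 2 (S j))
    (W : (ι → ℝ) → ℝ) (hW : W = fun x => ∑ j ∈ J, S j x)
    (htwist : ∀ (x : ι → ℝ) (i k : ι), i ≠ k →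
      iteratedFDeriv ℝ 2 W x ![Pi.single i 1, Pi.single k 1] ≤ 0) :
    (∀ x y : ι → ℝ, W (x ⊔ y) + W (x ⊓ y) ≤ W x + W y) ∧
    (∀ x y : ι → ℝ, (∀ z, W x ≤ W z) → (∀ z, W y ≤ W z) →
      (∀ z, W (x ⊓ y) ≤ W z) ∧ (∀ z, W (x ⊔ y) ≤ W z)) := by
  have hW2 : ContDiff ℝ 2 W := hW ▸ ContDiff.sum hS
  have hsub : ∀ x y : ι → ℝ, W (x ⊔ y) + W (x ⊓ y) ≤ W x + W y :=
    submodular_of_fderiv_fderiv_single_nonpos (hW2.differentiable two_ne_zero)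
      ((hW2.fderiv_right le_rfl).differentiable one_ne_zero)
      fun z i k hik => by simpa only [iteratedFDeriv_two_apply, Matrix.cons_val_zero, Matrix.cons_val_one] using htwist z i k hik
  refine ⟨hsub, fun x y hx hy => ⟨fun z => ?_, fun z => ?_⟩⟩ <;>
    linarith [hsub x y, hx z, hy z, hx (x ⊓ y), hy (x ⊔ y)]
end

section
/- (Gap summability) Let ω ∈ ℝ^d and let M be a strictly ordered, shift-invariant collection of configurations all with rotation vector ω. Suppose x, y ∈ M with x ≪ y and there is no z ∈ M with x ≪ z ≪ y. Let H_ω := {i ∈ ℤ^d : ⟨ω,i⟩ ∈ ℤ}. Then Σ_{i ∈ ℤ^d / H_ω} (y_i − x_i) ≤ 1, where the sum is over any set of representatives of the cosets of H_ω in ℤ^d. -/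
open scoped BigOperators

def StrictlyOrdered {d : ℕ} (M : Set ((Fin d → ℤ) → ℝ)) : Prop :=
  ∀ x ∈ M, ∀ y ∈ M, x = y ∨ (∀ i, x i < y i) ∨ (∀ i, y i < x i)

def ShiftInvariant {d : ℕ} (M : Set ((Fin d → ℤ) → ℝ)) : Prop :=
  ∀ x ∈ M, ∀ (k : Fin d → ℤ) (l : ℤ), tau k l x ∈ M

/-- `H_ω = {i ∈ ℤ^d : ⟨ω,i⟩ ∈ ℤ}`. -/
def Hlat {d : ℕ} (ω : Fin d → ℝ) : Set (Fin d → ℤ) :=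
  {i | ∃ m : ℤ, (∑ k, ω k * (i k : ℝ)) = (m : ℝ)}

/-- If a configuration with rotation vector `ω` is fixed by `τ_{k,l}`, then `⟨ω,k⟩ = -l`. -/
lemma rot_of_periodic {d : ℕ} {ω : Fin d → ℝ} {z : (Fin d → ℤ) → ℝ}
    (hz : HasRotVec z ω) {k : Fin d → ℤ} {l : ℤ} (h : tau k l z = z) :
    (∑ t, ω t * (k t : ℝ)) = -(l : ℝ) := by
  have hstep : ∀ i, z (i + k) = z i - l := by
    intro i
    have := congrFun h i
    simp only [tau] at this
    linarith
  have hn : ∀ n : ℕ, z ((n : ℤ) • k) = z 0 - n * l := by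
    intro n
    induction n with
    | zero => simp
    | succ n ih =>
      have : ((n + 1 : ℕ) : ℤ) • k = (n : ℤ) • k + k := by
        push_cast
        rw [add_smul, one_smul]
      rw [this, hstep, ih]
      push_cast
      ring
  have h1 : Filter.Tendsto (fun n : ℕ => z ((n : ℤ) • k) / n) Filter.atTop
      (nhds (-(l : ℝ))) := by
    have heq : (fun n : ℕ => z ((n : ℤ) • k) / n) =ᶠ[Filter.atTop]
        (fun n : ℕ => z 0 / n - l) := by
      filter_upwards [Filter.eventually_ge_atTop 1] with n hn1
      have hn0 : (n : ℝ) ≠ 0 := by positivity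
      rw [hn n, sub_div, mul_div_cancel_left₀ _ hn0]
    refine Filter.Tendsto.congr' heq.symm ?_
    have := (tendsto_const_div_atTop_nhds_zero_nat (z 0)).sub_const (l : ℝ)
    simpa using this
  exact tendsto_nhds_unique (hz k) h1

section Key

variable {d : ℕ} {ω : Fin d → ℝ} {M : Set ((Fin d → ℤ) → ℝ)}

/-- Key comparison: if `⟨ω,k⟩ ≠ -l`, the shifted pair `(τx, τy)` lies entirely on one
side of the gap `(x, y)`. -/
lemma key_lemma (hord : StrictlyOrdered M) (hshift : ShiftInvariant M)
    (hrot : ∀ x ∈ M, HasRotVec x ω)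
    {x y : (Fin d → ℤ) → ℝ} (hx : x ∈ M) (hy : y ∈ M)
    (hxy : ∀ i, x i < y i)
    (hgap : ¬ ∃ z ∈ M, (∀ i, x i < z i) ∧ (∀ i, z i < y i))
    (k : Fin d → ℤ) (l : ℤ) (hk : (∑ t, ω t * (k t : ℝ)) ≠ -(l : ℝ)) :
    (∀ i, y i ≤ x (i + k) + l) ∨ (∀ i, y (i + k) + l ≤ x i) := by
  set u := tau k l x with hu_def
  set v := tau k l y with hv_def
  have hu : u ∈ M := hshift x hx k l
  have hv : v ∈ M := hshift y hy k l
  rcases hord x hx u hu with hxu | hxu | hxu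
  · exact absurd (rot_of_periodic (hrot x hx) hxu.symm) hk
  · -- x ≪ u
    rcases hord u hu y hy with h | h | h
    · exact Or.inl fun i => le_of_eq (congrFun h i).symm
    · exact absurd ⟨u, hu, hxu, h⟩ hgap
    · exact Or.inl fun i => le_of_lt (h i)
  · -- u ≪ x
    rcases hord v hv x hx with h | h | h
    · exact Or.inr fun i => le_of_eq (congrFun h i)
    · exact Or.inr fun i => le_of_lt (h i)
    · -- x ≪ v
      rcases hord v hv y hy with h2 | h2 | h2
      · exact absurd (rot_of_periodic (hrot y hy) h2) hk
      · exact absurd ⟨v, hv, h, h2⟩ hgap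
      · -- y ≪ v; derive a contradiction using the inverse shift
        exfalso
        set w := tau (-k) (-l) x with hw_def
        have hw : w ∈ M := hshift x hx (-k) (-l)
        apply hgap
        refine ⟨w, hw, fun i => ?_, fun i => ?_⟩
        · -- x i < w i = x (i - k) - l, from u ≪ x at i + (-k)
          have := hxu (i + -k)
          simp only [hu_def, tau, neg_add_cancel_right] at this
          simp only [hw_def, tau]
          push_cast
          linarith
        · -- w i < y i : w i = x(i-k) - l < y(i-k) - l < y i
          have h3 := h2 (i + -k)
          simp only [hv_def, tau, neg_add_cancel_right] at h3
          have h4 := hxy (i + -k)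
          simp only [hw_def, tau]
          push_cast
          linarith

end Key

theorem stmt12 {d : ℕ} (ω : Fin d → ℝ) (M : Set ((Fin d → ℤ) → ℝ))
    (hord : StrictlyOrdered M) (hshift : ShiftInvariant M)
    (hrot : ∀ x ∈ M, HasRotVec x ω)
    (x y : (Fin d → ℤ) → ℝ) (hx : x ∈ M) (hy : y ∈ M)
    (hxy : ∀ i, x i < y i)
    (hgap : ¬ ∃ z ∈ M, (∀ i, x i < z i) ∧ (∀ i, z i < y i))
    (R : Set (Fin d → ℤ))
    (hR : ∀ i : Fin d → ℤ, ∃! j, j ∈ R ∧ i - j ∈ Hlat ω) :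
    ∃ s : ℝ, HasSum (fun i : R => y i - x i) s ∧ s ≤ 1 := by
  classical
  -- gap size is at most 1
  have hone : ∀ i, y i ≤ x i + 1 := by
    intro i
    have hk : (∑ t, ω t * ((0 : Fin d → ℤ) t : ℝ)) ≠ -((1 : ℤ) : ℝ) := by
      simp
    rcases key_lemma hord hshift hrot hx hy hxy hgap 0 1 hk with h | h
    · have := h i; simpa using this
    · have := h i
      simp only [add_zero] at this
      have := hxy i
      push_cast at *
      linarith
  -- distinct representatives are in distinct cosets
  have hRdist : ∀ i ∈ R, ∀ j ∈ R, i ≠ j → i - j ∉ Hlat ω := by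
    intro i hi j hj hij hmem
    obtain ⟨j', _, huniq⟩ := hR i
    have h1 : i = j' := huniq i ⟨hi, ⟨0, by simp⟩⟩
    have h2 : j = j' := huniq j ⟨hj, hmem⟩
    exact hij (h1.trans h2.symm)
  -- interval disjointness across distinct representatives
  have hdisj : ∀ i ∈ R, ∀ j ∈ R, i ≠ j → ∀ n m : ℤ,
      y j + m ≤ x i + n ∨ y i + n ≤ x j + m := by
    intro i hi j hj hij n m
    have hk : (∑ t, ω t * ((i - j) t : ℝ)) ≠ -(((n - m) : ℤ) : ℝ) := by
      intro h
      exact hRdist i hi j hj hij ⟨-(n - m), by push_cast at h ⊢; linarith⟩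
    have hadd : j + (i - j) = i := by abel
    rcases key_lemma hord hshift hrot hx hy hxy hgap (i - j) (n - m) hk with h | h
    · have := h j
      rw [hadd] at this
      push_cast at this
      left; linarith
    · have := h j
      rw [hadd] at this
      push_cast at this
      right; linarith
  set f : R → ℝ := fun i => y i - x i with hf_def
  have hfpos : ∀ i : R, 0 < f i := fun i => sub_pos.mpr (hxy i)
  -- key finite bound
  have hbound : ∀ s : Finset R, ∑ i ∈ s, f i ≤ 1 := by
    intro s
    rcases s.eq_empty_or_nonempty with rfl | ⟨i₀, hi₀⟩
    · simp
    set c : ℝ := Int.fract (x (i₀ : Fin d → ℤ)) with hc_def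
    set nn : R → ℤ := fun i => -⌊x (i : Fin d → ℤ) - c⌋ with hnn_def
    set a : R → ℝ := fun i => x (i : Fin d → ℤ) + nn i with ha_def
    have ha_eq : ∀ i : R, a i = Int.fract (x (i : Fin d → ℤ) - c) + c := by
      intro i
      simp only [ha_def, hnn_def, Int.fract]
      push_cast
      ring
    have ha_lb : ∀ i : R, c ≤ a i := by
      intro i; rw [ha_eq]; nlinarith [Int.fract_nonneg (x (i : Fin d → ℤ) - c)]
    have ha_ub : ∀ i : R, a i < c + 1 := by
      intro i; rw [ha_eq]; nlinarith [Int.fract_lt_one (x (i : Fin d → ℤ) - c)]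
    have ha0 : a i₀ = c := by
      rw [ha_eq]
      have : x (i₀ : Fin d → ℤ) - c = (⌊x (i₀ : Fin d → ℤ)⌋ : ℝ) := by
        rw [hc_def]; exact Int.self_sub_fract _
      rw [this, Int.fract_intCast]
      ring
    -- pairwise interval disjointness
    have hpair : ∀ i j : R, i ≠ j → a j + f j ≤ a i ∨ a i + f i ≤ a j := by
      intro i j hij
      have hij' : (i : Fin d → ℤ) ≠ (j : Fin d → ℤ) := fun h => hij (Subtype.ext h)
      rcases hdisj i i.2 j j.2 hij' (nn i) (nn j) with h | h
      · left; simp only [ha_def, hf_def]; linarith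
      · right; simp only [ha_def, hf_def]; linarith
    -- all intervals fit below c + 1
    have hup : ∀ i ∈ s, a i + f i ≤ c + 1 := by
      intro i _
      by_cases hii : i = i₀
      · subst hii
        rw [ha0]
        have := hone (i : Fin d → ℤ)
        simp only [hf_def]
        linarith
      · have hij' : (i : Fin d → ℤ) ≠ (i₀ : Fin d → ℤ) := fun h => hii (Subtype.ext h)
        rcases hdisj i i.2 i₀ i₀.2 hij' (nn i) (nn i₀ + 1) with h | h
        · -- y i₀ + (nn i₀ + 1) ≤ x i + nn i : impossible
          exfalso
          have h1 := ha_ub i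
          have h2 := hfpos i₀
          have : a i₀ + f i₀ + 1 ≤ a i := by
            simp only [ha_def, hf_def]
            push_cast at h ⊢
            linarith
          rw [ha0] at this
          linarith
        · have : a i + f i ≤ a i₀ + 1 := by
            simp only [ha_def, hf_def]
            push_cast at h ⊢
            linarith
          rw [ha0] at this
          linarith
    -- measure-theoretic argument
    have hmdisj : (↑s : Set R).PairwiseDisjoint
        (fun i => Set.Ioo (a i) (a i + f i)) := by
      intro i _ j _ hij
      rcases hpair i j hij with h | h
      · refine Set.disjoint_left.mpr fun t ht1 ht2 => ?_
        exact absurd (lt_of_lt_of_le ht2.2 (h.trans ht1.1.le)) (lt_irrefl t)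
      · refine Set.disjoint_left.mpr fun t ht1 ht2 => ?_
        exact absurd (lt_of_lt_of_le ht1.2 (h.trans ht2.1.le)) (lt_irrefl t)
    have hmeas := MeasureTheory.measure_biUnion_finset hmdisj
        (fun i _ => measurableSet_Ioo (a := a i) (b := a i + f i))
        (μ := MeasureTheory.volume)
    have hsub : (⋃ i ∈ s, Set.Ioo (a i) (a i + f i)) ⊆ Set.Ioc c (c + 1) := by
      intro t ht
      simp only [Set.mem_iUnion] at ht
      obtain ⟨i, hi, ht⟩ := ht
      exact ⟨lt_of_le_of_lt (ha_lb i) ht.1, le_trans ht.2.le (hup i hi)⟩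
    have hle := MeasureTheory.measure_mono (μ := MeasureTheory.volume) hsub
    rw [hmeas] at hle
    have hvol : ∀ i : R, MeasureTheory.volume (Set.Ioo (a i) (a i + f i)) =
        ENNReal.ofReal (f i) := by
      intro i; rw [Real.volume_Ioo]; congr 1; ring
    rw [Real.volume_Ioc] at hle
    have hsum : ∑ i ∈ s, MeasureTheory.volume (Set.Ioo (a i) (a i + f i)) =
        ENNReal.ofReal (∑ i ∈ s, f i) := by
      rw [ENNReal.ofReal_sum_of_nonneg fun i _ => (hfpos i).le]
      exact Finset.sum_congr rfl fun i _ => hvol i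
    rw [hsum] at hle
    have : ENNReal.ofReal (∑ i ∈ s, f i) ≤ ENNReal.ofReal 1 := by
      convert hle using 2; ring
    exact (ENNReal.ofReal_le_ofReal_iff (by norm_num)).mp this
  have hsummable : Summable f :=
    summable_of_sum_le (fun i => (hfpos i).le) hbound
  exact ⟨∑' i, f i, hsummable.hasSum, Summable.tsum_le_of_sum_le hsummable hbound⟩
end

section
/- (One-dimensional gap disjointness) Let M be a strictly ordered shift-invariant family of Birkhoff configurations of irrational rotation vector ω ∈ ℝ^d, and let x ≪ y be a gap in M (no element of M strictly between). Then for any i, j ∈ ℤ^d with ⟨ω, j − i⟩ ∉ ℤ and any m, n ∈ ℤ, the intervals (x_i + n, y_i + n) and (x_j + m, y_j + m) ⊂ ℝ are disjoint. -/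
open scoped BigOperators

/-- If a shift τ_{k,l} fixes `y`, then ⟨ω,k⟩ = -l. -/
lemma rot_eq_of_fixed {d : ℕ} (ω : Fin d → ℝ) (y : (Fin d → ℤ) → ℝ)
    (hy : HasRotVec y ω) (k : Fin d → ℤ) (l : ℤ) (heq : tau k l y = y) :
    (∑ r, ω r * (k r : ℝ)) = -(l : ℝ) := by
  have key : ∀ N : ℕ, y ((N : ℤ) • k) = y 0 - N * (l : ℝ) := by
    intro N
    induction N with
    | zero => simp
    | succ N ih =>
      have h1 : y ((N : ℤ) • k + k) + (l : ℝ) = y ((N : ℤ) • k) := by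
        have := congrFun heq ((N : ℤ) • k)
        simpa [tau] using this
      have h2 : ((N : ℕ) + 1 : ℤ) • k = (N : ℤ) • k + k := by
        push_cast
        rw [add_smul, one_smul]
      push_cast
      rw [h2]
      rw [ih] at h1
      linarith
  have t1 : Filter.Tendsto (fun N : ℕ => y ((N : ℤ) • k) / N) Filter.atTop
      (nhds (∑ r, ω r * (k r : ℝ))) := hy k
  have t2 : Filter.Tendsto (fun N : ℕ => y ((N : ℤ) • k) / N) Filter.atTop
      (nhds (-(l : ℝ))) := by
    have h0 : Filter.Tendsto (fun N : ℕ => y 0 / N - (l : ℝ)) Filter.atTop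
        (nhds (0 - (l : ℝ))) :=
      (tendsto_const_div_atTop_nhds_zero_nat (y 0)).sub tendsto_const_nhds
    rw [zero_sub] at h0
    refine h0.congr' ?_
    filter_upwards [Filter.eventually_ge_atTop 1] with N hN
    have hN0 : (N : ℝ) ≠ 0 := by positivity
    rw [key N]
    field_simp
  exact tendsto_nhds_unique t1 t2

theorem stmt13 {d : ℕ} (ω : Fin d → ℝ) (hirr : ¬ ∀ k, ∃ q : ℚ, ω k = (q : ℝ))
    (M : Set ((Fin d → ℤ) → ℝ))
    (hord : StrictlyOrdered M) (hshift : ShiftInvariant M)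
    (hBirk : ∀ x ∈ M, IsBirkhoff x) (hrot : ∀ x ∈ M, HasRotVec x ω)
    (x y : (Fin d → ℤ) → ℝ) (hx : x ∈ M) (hy : y ∈ M)
    (hxy : ∀ i, x i < y i)
    (hgap : ¬ ∃ z ∈ M, (∀ i, x i < z i) ∧ (∀ i, z i < y i))
    (i j : Fin d → ℤ)
    (hij : ¬ ∃ m : ℤ, (∑ k, ω k * ((j - i) k : ℝ)) = (m : ℝ))
    (m n : ℤ) :
    Disjoint (Set.Ioo (x i + (n : ℝ)) (y i + (n : ℝ)))
      (Set.Ioo (x j + (m : ℝ)) (y j + (m : ℝ))) := by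
  -- The two possible conclusions
  have main : y j + (m : ℝ) ≤ x i + (n : ℝ) ∨ y i + (n : ℝ) ≤ x j + (m : ℝ) := by
    set z : (Fin d → ℤ) → ℝ := tau (j - i) (m - n) y with hz_def
    have hz : z ∈ M := hshift y hy (j - i) (m - n)
    have hzval : ∀ t, z t = y (t + (j - i)) + ((m : ℝ) - (n : ℝ)) := by
      intro t; show y (t + (j - i)) + ((m - n : ℤ) : ℝ) = _; push_cast; ring
    have hij' : i + (j - i) = j := by ring
    rcases hord z hz x hx with h1 | h1 | h1
    · -- z = x : y j + m = x i + n
      left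
      have := congrFun h1 i
      rw [hzval i, hij'] at this
      linarith
    · -- z < x : y j + m < x i + n
      left
      have := h1 i
      rw [hzval i, hij'] at this
      linarith
    · -- x < z
      rcases hord y hy z hz with h2 | h2 | h2
      · -- y = z : rotation contradiction
        exfalso
        have heq : tau (j - i) (m - n) y = y := h2.symm
        have := rot_eq_of_fixed ω y (hrot y hy) (j - i) (m - n) heq
        apply hij
        exact ⟨n - m, by push_cast at this ⊢; linarith⟩
      · -- y < z and x < z : consider z' = τ_{i-j, n-m} y, then z' < y
        set z' : (Fin d → ℤ) → ℝ := tau (i - j) (n - m) y with hz'_def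
        have hz' : z' ∈ M := hshift y hy (i - j) (n - m)
        have hz'val : ∀ t, z' t = y (t + (i - j)) + ((n : ℝ) - (m : ℝ)) := by
          intro t; show y (t + (i - j)) + ((n - m : ℤ) : ℝ) = _; push_cast; ring
        have hz'lt : ∀ t, z' t < y t := by
          intro t
          have h3 := h2 (t + (i - j))
          rw [hzval (t + (i - j))] at h3
          have harr : t + (i - j) + (j - i) = t := by ring
          rw [harr] at h3
          rw [hz'val t]
          linarith
        have hji' : j + (i - j) = i := by ring
        rcases hord z' hz' x hx with h4 | h4 | h4
        · -- z' = x : y i + n = x j + m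
          right
          have := congrFun h4 j
          rw [hz'val j, hji'] at this
          linarith
        · -- z' < x
          right
          have := h4 j
          rw [hz'val j, hji'] at this
          linarith
        · -- x < z' < y : contradicts gap
          exact absurd ⟨z', hz', h4, hz'lt⟩ hgap
      · -- z < y and x < z : contradicts gap
        exact absurd ⟨z, hz, h1, h2⟩ hgap
  rw [Set.disjoint_left]
  rintro p ⟨hp1, hp2⟩ ⟨hq1, hq2⟩
  rcases main with h | h <;> linarith
end

section
/- (Parabolic comparison from positivity) Let A ⊆ ℝ be an interval, let H : A → L(ℓ-type space) be a time-dependent bounded linear operator family on ℝ^B, B finite, such that each off-diagonal entry of H(t) is ≥ 0 and diagonal entries are bounded below by −M. If u solves the linear ODE u'(t) = H(t) u(t) with u(0) ≥ 0 (componentwise) and u(0) ≠ 0, then u(t) ≥ 0 for all t ≥ 0; and moreover if some entry H(t)_{ik} ≥ λ > 0 for all t for a pair i ≠ k with u_k(0) > 0, then u_i(t) ≥ λ t e^{−Mt} u_k(0) for t ≥ 0. -/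
open Filter Topology

private lemma stmt14_expand {ι : Type*} [Fintype ι] [DecidableEq ι]
    (L : (ι → ℝ) →ₗ[ℝ] (ι → ℝ)) (x : ι → ℝ) (i : ι) :
    L x i = ∑ j, x j * L (Pi.single j 1) i := by
  have hx : x = ∑ j, x j • (Pi.single j 1 : ι → ℝ) := by
    funext m; simp [Finset.sum_apply, Pi.single_apply]
  conv_lhs => rw [hx]
  rw [map_sum]; simp [Finset.sum_apply]

private lemma stmt14_nonneg {ι : Type*} [Fintype ι] [DecidableEq ι]
    (H : ℝ → (ι → ℝ) →ₗ[ℝ] (ι → ℝ))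
    (hbdd : ∃ C : ℝ, ∀ (t : ℝ) (i k : ι), |H t (Pi.single k 1) i| ≤ C)
    (hoff : ∀ (t : ℝ) (i k : ι), i ≠ k → 0 ≤ H t (Pi.single k 1) i)
    (u : ℝ → ι → ℝ)
    (hu : ∀ t, HasDerivAt u (H t (u t)) t)
    (hu0 : ∀ j, 0 ≤ u 0 j) :
    ∀ t, 0 ≤ t → ∀ j, 0 ≤ u t j := by
  obtain ⟨C0, hC0⟩ := hbdd
  set C : ℝ := max C0 0 with hCdef
  have hCnn : 0 ≤ C := le_max_right _ _
  have hC : ∀ t (i k : ι), H t (Pi.single k 1) i ≤ C :=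
    fun t i k => le_trans (le_abs_self _) (le_trans (hC0 t i k) (le_max_left _ _))
  set n : ℝ := (Fintype.card ι : ℝ) with hndef
  have hnn : 0 ≤ n := Nat.cast_nonneg _
  set L : ℝ := n * C + 1 with hLdef
  have ucont : ∀ j, Continuous (fun t => u t j) :=
    fun j => continuous_iff_continuousAt.mpr (fun t => (hasDerivAt_pi.mp (hu t) j).continuousAt)
  intro t₁ ht₁ j
  have key : ∀ ε : ℝ, 0 < ε → ∀ s ∈ Set.Icc (0:ℝ) t₁, ∀ m, 0 < u s m + ε * Real.exp (L * s) := by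
    intro ε hε
    by_contra hcon
    push_neg at hcon
    set S : Set ℝ := Set.Icc 0 t₁ ∩ ⋃ m, {s | u s m + ε * Real.exp (L * s) ≤ 0} with hSdef
    have wcont : ∀ m : ι, Continuous (fun s => u s m + ε * Real.exp (L * s)) := by
      intro m
      exact (ucont m).add (continuous_const.mul
        (Real.continuous_exp.comp (continuous_const.mul continuous_id)))
    have hSne : S.Nonempty := by
      obtain ⟨s, hs, m, hm⟩ := hcon
      exact ⟨s, hs, Set.mem_iUnion.mpr ⟨m, hm⟩⟩
    have hSclosed : IsClosed S := by
      refine isClosed_Icc.inter (isClosed_iUnion_of_finite fun m => ?_)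
      exact isClosed_le (wcont m) continuous_const
    have hbdl : BddBelow S := ⟨0, fun s hs => hs.1.1⟩
    set t₀ : ℝ := sInf S with ht₀def
    have ht₀S : t₀ ∈ S := hSclosed.csInf_mem hSne hbdl
    obtain ⟨⟨ht₀0, ht₀1⟩, hmem⟩ := ht₀S
    obtain ⟨i₀, hi₀⟩ : ∃ i₀, u t₀ i₀ + ε * Real.exp (L * t₀) ≤ 0 := by
      simpa using hmem
    have ht₀pos : 0 < t₀ := by
      rcases eq_or_lt_of_le ht₀0 with h | h
      · exfalso
        rw [← h] at hi₀
        simp only [mul_zero, Real.exp_zero, mul_one] at hi₀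
        nlinarith [hu0 i₀]
      · exact h
    have hbefore : ∀ s, 0 ≤ s → s < t₀ → ∀ m, 0 < u s m + ε * Real.exp (L * s) := by
      intro s hs hst m
      by_contra h
      push_neg at h
      have hsS : s ∈ S := ⟨⟨hs, le_trans hst.le ht₀1⟩, Set.mem_iUnion.mpr ⟨m, h⟩⟩
      exact absurd (csInf_le hbdl hsS) (not_le.mpr hst)
    have hge : ∀ m, 0 ≤ u t₀ m + ε * Real.exp (L * t₀) := by
      intro m
      haveI : (𝓝[Set.Iio t₀] t₀).NeBot := nhdsLT_neBot t₀
      have htend : Filter.Tendsto (fun s => u s m + ε * Real.exp (L * s)) (𝓝[Set.Iio t₀] t₀)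
          (𝓝 (u t₀ m + ε * Real.exp (L * t₀))) :=
        ((wcont m).tendsto t₀).mono_left nhdsWithin_le_nhds
      refine ge_of_tendsto htend ?_
      have hev : ∀ᶠ s in 𝓝[<] t₀, 0 < s :=
        eventually_nhdsWithin_of_eventually_nhds (eventually_gt_nhds ht₀pos)
      filter_upwards [self_mem_nhdsWithin, hev] with s hs hspos
      exact (hbefore s hspos.le hs m).le
    have heq : u t₀ i₀ + ε * Real.exp (L * t₀) = 0 := le_antisymm hi₀ (hge i₀)
    -- the derivative of coordinate i₀ at t₀
    set d : ℝ := H t₀ (u t₀) i₀ + ε * (Real.exp (L * t₀) * L) with hddef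
    have hd : HasDerivAt (fun s => u s i₀ + ε * Real.exp (L * s)) d t₀ := by
      have h1 : HasDerivAt (fun s : ℝ => L * s) L t₀ := by
        simpa using (hasDerivAt_id t₀).const_mul L
      exact (hasDerivAt_pi.mp (hu t₀) i₀).add ((h1.exp).const_mul ε)
    have hd0 : d ≤ 0 := by
      have hslope := hasDerivAt_iff_tendsto_slope.mp hd
      have htd : Tendsto (slope (fun s => u s i₀ + ε * Real.exp (L * s)) t₀) (𝓝[<] t₀) (𝓝 d) :=
        hslope.mono_left (nhdsWithin_mono _ fun s hs => ne_of_lt hs)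
      refine le_of_tendsto htd ?_
      have hev : ∀ᶠ s in 𝓝[<] t₀, 0 < s :=
        eventually_nhdsWithin_of_eventually_nhds (eventually_gt_nhds ht₀pos)
      filter_upwards [self_mem_nhdsWithin, hev] with s hs hspos
      have hnum : 0 ≤ u s i₀ + ε * Real.exp (L * s) := (hbefore s hspos.le hs i₀).le
      have hden : s - t₀ < 0 := sub_neg.mpr hs
      rw [slope_def_field]
      rw [heq, sub_zero]
      exact div_nonpos_of_nonneg_of_nonpos hnum hden.le
    have hdpos : 0 < d := by
      have hsum : H t₀ (u t₀) i₀ = ∑ m, u t₀ m * H t₀ (Pi.single m 1) i₀ :=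
        stmt14_expand _ _ _
      have hterm : ∀ m : ι, -(ε * Real.exp (L * t₀)) * C ≤ u t₀ m * H t₀ (Pi.single m 1) i₀ := by
        intro m
        have hHle : H t₀ (Pi.single m 1) i₀ ≤ C := hC _ _ _
        by_cases hmi : i₀ = m
        · subst hmi
          have hui : u t₀ i₀ = -(ε * Real.exp (L * t₀)) := by linarith
          rw [hui]
          exact mul_le_mul_of_nonpos_left hHle (by nlinarith [Real.exp_pos (L * t₀)])
        · have hH0 : 0 ≤ H t₀ (Pi.single m 1) i₀ := hoff _ _ _ hmi
          have hum : -(ε * Real.exp (L * t₀)) ≤ u t₀ m := by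
            have := hge m; linarith
          calc -(ε * Real.exp (L * t₀)) * C
              ≤ -(ε * Real.exp (L * t₀)) * H t₀ (Pi.single m 1) i₀ :=
                mul_le_mul_of_nonpos_left hHle (by nlinarith [Real.exp_pos (L * t₀)])
            _ ≤ u t₀ m * H t₀ (Pi.single m 1) i₀ :=
                mul_le_mul_of_nonneg_right hum hH0
      have hsum_lb : n * (-(ε * Real.exp (L * t₀)) * C) ≤ H t₀ (u t₀) i₀ := by
        rw [hsum]
        calc n * (-(ε * Real.exp (L * t₀)) * C)
            = ∑ _m : ι, -(ε * Real.exp (L * t₀)) * C := by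
              rw [Finset.sum_const, nsmul_eq_mul]; simp [hndef]
          _ ≤ ∑ m, u t₀ m * H t₀ (Pi.single m 1) i₀ :=
              Finset.sum_le_sum fun m _ => hterm m
      have hepos : 0 < Real.exp (L * t₀) := Real.exp_pos _
      have hLval : ε * (Real.exp (L * t₀) * L)
          = ε * Real.exp (L * t₀) * (n * C) + ε * Real.exp (L * t₀) := by
        rw [hLdef]; ring
      rw [hddef]
      nlinarith [hsum_lb, mul_pos hε hepos, hLval]
    exact absurd hd0 (not_le.mpr hdpos)
  by_contra h
  push_neg at h
  set ε : ℝ := -u t₁ j / Real.exp (L * t₁) with hεdef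
  have hεpos : 0 < ε := div_pos (by linarith) (Real.exp_pos _)
  have := key ε hεpos t₁ ⟨ht₁, le_refl _⟩ j
  rw [hεdef, div_mul_cancel₀ _ (Real.exp_ne_zero _)] at this
  linarith

theorem stmt14 {ι : Type*} [Fintype ι] [DecidableEq ι]
    (H : ℝ → (ι → ℝ) →ₗ[ℝ] (ι → ℝ)) (M : ℝ)
    (hcont : ∀ (i k : ι), Continuous fun t => H t (Pi.single k 1) i)
    (hbdd : ∃ C : ℝ, ∀ (t : ℝ) (i k : ι), |H t (Pi.single k 1) i| ≤ C)
    (hoff : ∀ (t : ℝ) (i k : ι), i ≠ k → 0 ≤ H t (Pi.single k 1) i)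
    (hdiag : ∀ (t : ℝ) (i : ι), -M ≤ H t (Pi.single i 1) i)
    (u : ℝ → ι → ℝ)
    (hu : ∀ t, HasDerivAt u (H t (u t)) t)
    (hu0 : 0 ≤ u 0) (hu0' : u 0 ≠ 0) :
    (∀ t, 0 ≤ t → 0 ≤ u t) ∧
    ∀ (i k : ι) (lam : ℝ), i ≠ k → 0 < lam →
      (∀ t, 0 ≤ t → lam ≤ H t (Pi.single k 1) i) → 0 < u 0 k →
      ∀ t, 0 ≤ t → lam * t * Real.exp (-M * t) * u 0 k ≤ u t i := by
  have hu0c : ∀ j, 0 ≤ u 0 j := fun j => hu0 j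
  have hnn : ∀ t, 0 ≤ t → ∀ j, 0 ≤ u t j := stmt14_nonneg H hbdd hoff u hu hu0c
  -- a monotonicity helper
  have mono : ∀ (f f' : ℝ → ℝ), (∀ t, HasDerivAt f (f' t) t) → (∀ t, 0 < t → 0 ≤ f' t) →
      ∀ t, 0 ≤ t → f 0 ≤ f t := by
    intro f f' hf hf' t ht
    have hmono : MonotoneOn f (Set.Ici 0) := by
      apply monotoneOn_of_deriv_nonneg (convex_Ici 0)
      · exact (continuous_iff_continuousAt.mpr fun x => (hf x).continuousAt).continuousOn
      · intro x _; exact (hf x).differentiableAt.differentiableWithinAt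
      · intro x hx
        rw [interior_Ici] at hx
        rw [(hf x).deriv]
        exact hf' x hx
    exact hmono Set.self_mem_Ici (Set.mem_Ici.mpr ht) ht
  refine ⟨fun t ht => fun j => hnn t ht j, ?_⟩
  intro i k lam hik hlam hHik huk t ht
  have hexp : ∀ s : ℝ, Real.exp (M * s) * Real.exp (-M * s) = 1 := by
    intro s; rw [← Real.exp_add]; ring_nf; exact Real.exp_zero
  -- step A : lower bound for u t k
  have derivk : ∀ s : ℝ, HasDerivAt (fun t => Real.exp (M * t) * u t k)
      (Real.exp (M * s) * M * u s k + Real.exp (M * s) * (H s (u s) k)) s := by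
    intro s
    have h1 : HasDerivAt (fun t : ℝ => M * t) M s := by
      simpa using (hasDerivAt_id s).const_mul M
    exact (h1.exp).mul (hasDerivAt_pi.mp (hu s) k)
  have stepA : ∀ s, 0 ≤ s → u 0 k ≤ Real.exp (M * s) * u s k := by
    have h := mono (fun t => Real.exp (M * t) * u t k)
      (fun s => Real.exp (M * s) * M * u s k + Real.exp (M * s) * (H s (u s) k))
      derivk ?_
    · intro s hs
      have := h s hs
      simpa using this
    · intro s hs
      have hnns := hnn s hs.le
      have hkey : -M * u s k ≤ H s (u s) k := by
        rw [stmt14_expand]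
        rw [← Finset.add_sum_erase _ _ (Finset.mem_univ k)]
        have hrest : 0 ≤ ∑ m ∈ Finset.univ.erase k, u s m * H s (Pi.single m 1) k := by
          refine Finset.sum_nonneg fun m hm => ?_
          exact mul_nonneg (hnns m) (hoff s k m (Finset.ne_of_mem_erase hm).symm)
        have hdk : u s k * (-M) ≤ u s k * H s (Pi.single k 1) k :=
          mul_le_mul_of_nonneg_left (hdiag s k) (hnns k)
        nlinarith
      have hepos : 0 < Real.exp (M * s) := Real.exp_pos _
      show 0 ≤ Real.exp (M * s) * M * u s k + Real.exp (M * s) * (H s (u s) k)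
      nlinarith [mul_le_mul_of_nonneg_left hkey hepos.le]
  have stepA' : ∀ s, 0 ≤ s → Real.exp (-M * s) * u 0 k ≤ u s k := by
    intro s hs
    have h1 := stepA s hs
    have h2 := hexp s
    have he : 0 < Real.exp (-M * s) := Real.exp_pos _
    have h3 : Real.exp (-M * s) * (Real.exp (M * s) * u s k) = u s k := by
      rw [← mul_assoc, mul_comm (Real.exp (-M * s)) (Real.exp (M * s)), h2, one_mul]
    nlinarith [mul_le_mul_of_nonneg_left h1 he.le, h3]
  -- step B
  have derivg : ∀ s : ℝ, HasDerivAt (fun t => Real.exp (M * t) * u t i - lam * t * u 0 k)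
      (Real.exp (M * s) * M * u s i + Real.exp (M * s) * (H s (u s) i) - lam * u 0 k) s := by
    intro s
    have h1 : HasDerivAt (fun t : ℝ => M * t) M s := by
      simpa using (hasDerivAt_id s).const_mul M
    have h2 : HasDerivAt (fun t : ℝ => lam * t * u 0 k) (lam * u 0 k) s := by
      simpa using (((hasDerivAt_id s).const_mul lam).mul_const (u 0 k))
    exact ((h1.exp).mul (hasDerivAt_pi.mp (hu s) i)).sub h2
  have stepB := mono (fun t => Real.exp (M * t) * u t i - lam * t * u 0 k)
      (fun s => Real.exp (M * s) * M * u s i + Real.exp (M * s) * (H s (u s) i) - lam * u 0 k)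
      derivg ?_
  · have h := stepB t ht
    simp only [mul_zero, Real.exp_zero, one_mul, zero_mul, mul_zero, sub_zero] at h
    -- h : u 0 i ≤ exp (M t) * u t i - lam * t * u 0 k  (note (fun..) 0 simplifies)
    have h0 : 0 ≤ u 0 i := hu0c i
    have he : 0 < Real.exp (-M * t) := Real.exp_pos _
    have h2 := hexp t
    have h3 : lam * t * u 0 k ≤ Real.exp (M * t) * u t i := by linarith
    have h4 : Real.exp (-M * t) * (Real.exp (M * t) * u t i) = u t i := by
      rw [← mul_assoc, mul_comm (Real.exp (-M * t)) (Real.exp (M * t)), h2, one_mul]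
    nlinarith [mul_le_mul_of_nonneg_left h3 he.le, h4]
  · intro s hs
    have hnns := hnn s hs.le
    have hkey : -M * u s i + Real.exp (-M * s) * u 0 k * lam ≤ H s (u s) i := by
      rw [stmt14_expand]
      rw [← Finset.add_sum_erase _ _ (Finset.mem_univ i)]
      have hkmem : k ∈ Finset.univ.erase i := Finset.mem_erase.mpr ⟨Ne.symm hik, Finset.mem_univ k⟩
      rw [← Finset.add_sum_erase _ _ hkmem]
      have hrest : 0 ≤ ∑ m ∈ (Finset.univ.erase i).erase k, u s m * H s (Pi.single m 1) i := by
        refine Finset.sum_nonneg fun m hm => ?_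
        have hmi : i ≠ m := (Finset.ne_of_mem_erase (Finset.mem_of_mem_erase hm)).symm
        exact mul_nonneg (hnns m) (hoff s i m hmi)
      have hdi : u s i * (-M) ≤ u s i * H s (Pi.single i 1) i :=
        mul_le_mul_of_nonneg_left (hdiag s i) (hnns i)
      have hdk : Real.exp (-M * s) * u 0 k * lam ≤ u s k * H s (Pi.single k 1) i := by
        refine mul_le_mul (stepA' s hs.le) (hHik s hs.le) hlam.le (hnns k)
      nlinarith
    have hepos : 0 < Real.exp (M * s) := Real.exp_pos _
    have h2 := hexp s
    show 0 ≤ Real.exp (M * s) * M * u s i + Real.exp (M * s) * (H s (u s) i) - lam * u 0 k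
    have h4 : Real.exp (M * s) * (Real.exp (-M * s) * u 0 k * lam) = u 0 k * lam := by
      rw [← mul_assoc, ← mul_assoc, h2, one_mul]
    nlinarith [mul_le_mul_of_nonneg_left hkey hepos.le, h4]
end

section
/- (Projection of a ghost circle is a homeomorphism onto ℝ) Let Γ ⊂ ℝ^{ℤ^d} (with product topology) be nonempty, closed, connected, strictly totally ordered (for all x,y ∈ Γ: x ≪ y, x = y, or x ≫ y), and invariant under the vertical shift x ↦ x + 1. Then for every j ∈ ℤ^d the coordinate projection π_j : Γ → ℝ, π_j(x) = x_j, is a homeomorphism. -/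
theorem stmt15 {d : ℕ} (Γ : Set ((Fin d → ℤ) → ℝ)) (hne : Γ.Nonempty)
    (hcl : IsClosed Γ) (hconn : IsConnected Γ)
    (hord : ∀ x ∈ Γ, ∀ y ∈ Γ, (∀ i, x i < y i) ∨ x = y ∨ (∀ i, y i < x i))
    (hshift : (fun x : (Fin d → ℤ) → ℝ => x + 1) '' Γ = Γ) :
    ∀ j : Fin d → ℤ, IsHomeomorph (fun x : Γ => (x : (Fin d → ℤ) → ℝ) j) := by
  have hadd : ∀ x ∈ Γ, x + 1 ∈ Γ := by
    intro x hx
    rw [← hshift]; exact ⟨x, hx, rfl⟩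
  have hsub : ∀ x ∈ Γ, x - 1 ∈ Γ := by
    intro x hx
    rw [← hshift] at hx
    obtain ⟨y, hy, hyx⟩ := hx
    have : x - 1 = y := by simp [← hyx]
    rwa [this]
  have hinj : ∀ j : Fin d → ℤ, ∀ x ∈ Γ, ∀ y ∈ Γ, x j = y j → x = y := by
    intro j x hx y hy hxy
    rcases hord x hx y hy with h | h | h
    · exact absurd hxy (ne_of_lt (h j))
    · exact h
    · exact absurd hxy.symm (ne_of_lt (h j))
  have hsurj : ∀ j : Fin d → ℤ, ∀ r : ℝ, ∃ x ∈ Γ, x j = r := by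
    intro j r
    obtain ⟨x0, hx0⟩ := hne
    have hn : ∀ n : ℕ, (x0 + n) ∈ Γ ∧ (x0 - n) ∈ Γ := by
      intro n
      induction n with
      | zero => refine ⟨?_, ?_⟩ <;> simpa using hx0
      | succ n ih =>
        constructor
        · have := hadd _ ih.1
          have he : x0 + (n + 1 : ℕ) = (x0 + n) + 1 := by push_cast; ring
          rwa [he]
        · have := hsub _ ih.2
          have he : x0 - (n + 1 : ℕ) = (x0 - n) - 1 := by push_cast; ring
          rwa [he]
    have hpc : IsPreconnected ((fun x : (Fin d → ℤ) → ℝ => x j) '' Γ) :=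
      hconn.isPreconnected.image _ (continuous_apply j).continuousOn
    obtain ⟨n, hnn⟩ := exists_nat_ge (|r - x0 j|)
    have hb := abs_le.1 hnn
    have h1 : x0 j - n ∈ ((fun x : (Fin d → ℤ) → ℝ => x j) '' Γ) :=
      ⟨x0 - n, (hn n).2, by simp⟩
    have h2 : x0 j + n ∈ ((fun x : (Fin d → ℤ) → ℝ => x j) '' Γ) :=
      ⟨x0 + n, (hn n).1, by simp⟩
    have hr : r ∈ Set.Icc (x0 j - n) (x0 j + n) := ⟨by linarith [hb.1], by linarith [hb.2]⟩
    obtain ⟨x, hx, hxr⟩ := hpc.Icc_subset h1 h2 hr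
    exact ⟨x, hx, hxr⟩
  intro j
  set f : Γ → ℝ := fun x => (x : (Fin d → ℤ) → ℝ) j with hf
  have hbij : Function.Bijective f := by
    constructor
    · intro x y hxy
      exact Subtype.ext (hinj j x.1 x.2 y.1 y.2 hxy)
    · intro r
      obtain ⟨x, hx, hxr⟩ := hsurj j r
      exact ⟨⟨x, hx⟩, hxr⟩
  set e : Γ ≃ ℝ := Equiv.ofBijective f hbij with he
  have hesymm : ∀ t : ℝ, ((e.symm t : Γ) : (Fin d → ℤ) → ℝ) j = t := by
    intro t
    have := e.apply_symm_apply t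
    simpa [he, Equiv.ofBijective] using this
  -- continuity of each coordinate of the inverse
  have hcoord : ∀ i : Fin d → ℤ, Continuous fun t : ℝ => ((e.symm t : Γ) : (Fin d → ℤ) → ℝ) i := by
    intro i
    set φ : ℝ → ℝ := fun t => ((e.symm t : Γ) : (Fin d → ℤ) → ℝ) i with hφ
    have hmono : StrictMono φ := by
      intro t s hts
      set x := e.symm t
      set y := e.symm s
      have hxj : (x : (Fin d → ℤ) → ℝ) j = t := hesymm t
      have hyj : (y : (Fin d → ℤ) → ℝ) j = s := hesymm s
      rcases hord x.1 x.2 y.1 y.2 with h | h | h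
      · exact h i
      · exfalso; rw [h, hyj] at hxj; exact (ne_of_lt hts) hxj.symm
      · exfalso; have := h j; rw [hxj, hyj] at this; linarith
    have hφsurj : Function.Surjective φ := by
      intro r
      obtain ⟨x, hx, hxr⟩ := hsurj i r
      refine ⟨x j, ?_⟩
      have hx' : e.symm (x j) = ⟨x, hx⟩ := by
        apply e.injective
        rw [e.apply_symm_apply]
        rfl
      simp [hφ, hx', hxr]
    exact (StrictMono.orderIsoOfSurjective φ hmono hφsurj).toHomeomorph.continuous
  have hcontsymm : Continuous fun t : ℝ => (e.symm t : Γ) := by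
    apply continuous_induced_rng.2
    exact continuous_pi fun i => hcoord i
  have hcontf : Continuous f := (continuous_apply j).comp continuous_subtype_val
  exact (Homeomorph.mk e hcontf hcontsymm).isHomeomorph
end

section
/- (Unbounded oscillation destroys minimizing foliations, abstract core) Let S : ℝ^{ℤ^d} → ℝ depend only on coordinates in a finite ball B₀^r around 0, and suppose its oscillation over a set K of configurations is at most N (i.e. |S(x) − S(y)| ≤ N for x,y ∈ K). Let V : ℝ → ℝ be 1-periodic with V(ξ) − V(ν) > (2r+1)^d N for some ξ, ν. Define the perturbed local energy S̃_j(x) := S(τ_{j,0}x) + V(x_j). Then no configuration x ∈ K closed under the modification x ↦ x + (ν−ξ)·δ_0 with x_0 = ξ can be a global minimizer of the formal action Σ_j S̃_j: explicitly, for B ⊇ B₀^r, setting y := (ν − ξ)·δ_0 (the configuration supported at 0), one has Σ_{j∈B} (S̃_j(x) − S̃_j(x+y)) > 0. -/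
open scoped BigOperators

def latNorm {d : ℕ} (i : Fin d → ℤ) : ℕ := ∑ k, (i k).natAbs

theorem stmt17 {d r : ℕ} (S : ((Fin d → ℤ) → ℝ) → ℝ)
    (hloc : ∀ x y : (Fin d → ℤ) → ℝ, (∀ i, latNorm i ≤ r → x i = y i) → S x = S y)
    (K : Set ((Fin d → ℤ) → ℝ))
    (hKshift : ∀ x ∈ K, ∀ j : Fin d → ℤ, tau j 0 x ∈ K)
    (N : ℝ) (hosc : ∀ x ∈ K, ∀ y ∈ K, |S x - S y| ≤ N)
    (V : ℝ → ℝ) (hV : ∀ t, V (t + 1) = V t)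
    (ξ ν : ℝ) (hbig : (((2 * r + 1) ^ d : ℕ) : ℝ) * N < V ξ - V ν)
    (x : (Fin d → ℤ) → ℝ) (hx : x ∈ K) (hx0 : x 0 = ξ)
    (y : (Fin d → ℤ) → ℝ) (hy : y = fun i => if i = 0 then ν - ξ else 0)
    (hxyK : x + y ∈ K)
    (B : Finset (Fin d → ℤ)) (hB : ∀ j, latNorm j ≤ r → j ∈ B) :
    0 < ∑ j ∈ B, ((S (tau j 0 x) + V (x j)) - (S (tau j 0 (x + y)) + V ((x + y) j))) := by
  have hN : 0 ≤ N := by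
    have := hosc x hx x hx; simpa using this
  have hyj : ∀ j : Fin d → ℤ, j ≠ 0 → (x + y) j = x j := by
    intro j hj
    simp [hy, Pi.add_apply, hj]
  have hy0 : (x + y) 0 = ν := by
    simp [hy, Pi.add_apply, hx0]
  have hlat0 : latNorm (0 : Fin d → ℤ) ≤ r := by
    simp [latNorm]
  have hlatneg : ∀ i : Fin d → ℤ, latNorm (-i) = latNorm i := by
    intro i; unfold latNorm; simp
  -- S applied to far shifts coincide
  have hSeq : ∀ j : Fin d → ℤ, ¬ latNorm j ≤ r →
      S (tau j 0 x) = S (tau j 0 (x + y)) := by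
    intro j hj
    apply hloc
    intro i hi
    have hij : i + j ≠ 0 := by
      intro h
      have hji : j = -i := (neg_eq_of_add_eq_zero_right h).symm
      exact hj (by rw [hji, hlatneg]; exact hi)
    simp only [tau]
    rw [hyj _ hij]
  set B' := B.filter (fun j => latNorm j ≤ r) with hB'
  have hsum_eq : ∑ j ∈ B, ((S (tau j 0 x) + V (x j)) - (S (tau j 0 (x + y)) + V ((x + y) j)))
      = ∑ j ∈ B', ((S (tau j 0 x) + V (x j)) - (S (tau j 0 (x + y)) + V ((x + y) j))) := by
    rw [hB']
    refine (Finset.sum_filter_of_ne ?_).symm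
    intro j _ hne
    by_contra hj
    apply hne
    have hjne : j ≠ 0 := by
      intro h; exact hj (h ▸ hlat0)
    rw [hSeq j hj, hyj j hjne]
    ring
  rw [hsum_eq]
  have hsplit : ∑ j ∈ B', ((S (tau j 0 x) + V (x j)) - (S (tau j 0 (x + y)) + V ((x + y) j)))
      = (∑ j ∈ B', (S (tau j 0 x) - S (tau j 0 (x + y))))
        + (∑ j ∈ B', (V (x j) - V ((x + y) j))) := by
    rw [← Finset.sum_add_distrib]
    apply Finset.sum_congr rfl
    intro j _; ring
  rw [hsplit]
  have h0mem : (0 : Fin d → ℤ) ∈ B' := by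
    rw [hB', Finset.mem_filter]
    exact ⟨hB 0 hlat0, hlat0⟩
  have hVsum : ∑ j ∈ B', (V (x j) - V ((x + y) j)) = V ξ - V ν := by
    rw [Finset.sum_eq_single_of_mem 0 h0mem]
    · rw [hx0, hy0]
    · intro j _ hjne
      rw [hyj j hjne]; ring
  have hSge : ∀ j ∈ B', -N ≤ S (tau j 0 x) - S (tau j 0 (x + y)) := by
    intro j _
    have h := hosc _ (hKshift x hx j) _ (hKshift _ hxyK j)
    have := abs_le.mp h
    linarith [this.1]
  have hcard : B'.card ≤ (2 * r + 1) ^ d := by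
    have hsub : B' ⊆ Fintype.piFinset (fun _ : Fin d => Finset.Icc (-(r : ℤ)) r) := by
      intro j hj
      rw [hB', Finset.mem_filter] at hj
      simp only [Fintype.mem_piFinset, Finset.mem_Icc]
      intro k
      have h1 : (j k).natAbs ≤ latNorm j := by
        unfold latNorm
        exact Finset.single_le_sum (f := fun k => (j k).natAbs)
          (fun _ _ => Nat.zero_le _) (Finset.mem_univ k)
      have h2 : (j k).natAbs ≤ r := le_trans h1 hj.2
      omega
    calc B'.card ≤ _ := Finset.card_le_card hsub
      _ = (2 * r + 1) ^ d := by
        rw [Fintype.card_piFinset]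
        simp only [Int.card_Icc]
        rw [Finset.prod_const, Finset.card_univ, Fintype.card_fin]
        congr 1
        omega
  have hSsum : -(((2 * r + 1) ^ d : ℕ) : ℝ) * N
      ≤ ∑ j ∈ B', (S (tau j 0 x) - S (tau j 0 (x + y))) := by
    have h1 : (B'.card : ℝ) * (-N) ≤ ∑ j ∈ B', (S (tau j 0 x) - S (tau j 0 (x + y))) := by
      have := Finset.card_nsmul_le_sum B' _ (-N) hSge
      simpa [nsmul_eq_mul] using this
    have h2 : (B'.card : ℝ) ≤ (((2 * r + 1) ^ d : ℕ) : ℝ) := by exact_mod_cast hcard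
    nlinarith
  rw [hVsum]
  linarith
end
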